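/- arXiv:2111.11217 — 11 statements merged into one kernel-verified Lean document; each statement's English description precedes it below -/
import Mathlib

section
/- In a rigid abelian symmetric monoidal category A, if U is a subobject of the unit object 1, then 1 decomposes as the direct sum of U and U^⊥, where U^⊥ is the kernel of the composite 1 → U^∨ induced by dualising the inclusion U → 1. -/
/-!
In a rigid category, tensoring with `X` is both a left and a right adjoint (the partners being
tensoring with `Xᘁ` and `ᘁX`), hence exact. For a subobject `m : Z ⟶ 𝟙` this gives
`Z ⊗ cokernel m = 0`, so `Z ⊗ 𝟙` is a quotient of `Z ⊗ Z`.

Let `K` be the kernel of `φ : 𝟙 ⟶ Uᘁ`. Whiskering `φ` by `U` and evaluating recovers the inclusion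
of `U`, so `K ⊗ U = 0`. The intersection `W` of `K` and `U` then has `W ⊗ W ⊆ K ⊗ U = 0`, so
`W = 0` and `U ⊞ K ⟶ 𝟙` is mono. Its cokernel `Q` is a quotient of `𝟙 / U`, so `U ⊗ Q = 0` and
`Qᘁ ⊗ Uᘁ ≅ (U ⊗ Q)ᘁ = 0`. As `Q` is also a quotient of the image of `φ`, a subobject of `Uᘁ`,
this gives `Qᘁ ⊗ Q = 0`; by the zig-zag identity `Q` is a retract of `Q ⊗ Qᘁ ⊗ Q`, so `Q = 0`.
-/

open CategoryTheory CategoryTheory.Limits CategoryTheory.MonoidalCategory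

namespace CategoryTheory.Limits.biprod

variable {C : Type*} [Category C] [Preadditive C] [HasBinaryBiproducts C]

lemma left_comp_cokernel_π_desc {X Y Z : C} (f : X ⟶ Z) (g : Y ⟶ Z) [HasCokernel (desc f g)] :
    f ≫ cokernel.π (desc f g) = 0 := by
  simpa only [inl_desc_assoc, comp_zero] using inl ≫= cokernel.condition (desc f g)

lemma right_comp_cokernel_π_desc {X Y Z : C} (f : X ⟶ Z) (g : Y ⟶ Z) [HasCokernel (desc f g)] :
    g ≫ cokernel.π (desc f g) = 0 := by
  simpa only [inr_desc_assoc, comp_zero] using inr ≫= cokernel.condition (desc f g)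

lemma mono_desc_of_mono_comp_cokernel_π {X Y Z : C} (f : X ⟶ Z) (g : Y ⟶ Z) [Mono f]
    [HasCokernel f] [Mono (g ≫ cokernel.π f)] : Mono (desc f g) := by
  refine Preadditive.mono_of_cancel_zero _ fun h hh ↦ ?_
  rw [desc_eq, Preadditive.comp_add] at hh
  have hsnd : h ≫ snd = 0 := by
    refine zero_of_comp_mono (g ≫ cokernel.π f) ?_
    simpa [cokernel.condition] using hh =≫ cokernel.π f
  have hfst : h ≫ fst = 0 := by
    refine zero_of_comp_mono f ?_
    simpa [reassoc_of% hsnd] using hh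
  ext <;> simp [hfst, hsnd]

end CategoryTheory.Limits.biprod

namespace CategoryTheory.RigidCategory

section Rigid

variable {C : Type*} [Category C] [MonoidalCategory C] [RigidCategory C]

instance (X : C) : (tensorLeft X).IsLeftAdjoint := ⟨_, ⟨tensorLeftAdjunction (ᘁX) X⟩⟩
instance (X : C) : (tensorLeft X).IsRightAdjoint := ⟨_, ⟨tensorLeftAdjunction X (Xᘁ)⟩⟩
instance (X : C) : (tensorRight X).IsLeftAdjoint := ⟨_, ⟨tensorRightAdjunction X (Xᘁ)⟩⟩
instance (X : C) : (tensorRight X).IsRightAdjoint := ⟨_, ⟨tensorRightAdjunction (ᘁX) X⟩⟩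

instance (X : C) {Y Z : C} (f : Y ⟶ Z) [Mono f] : Mono (X ◁ f) := (tensorLeft X).map_mono f
instance (X : C) {Y Z : C} (f : Y ⟶ Z) [Epi f] : Epi (X ◁ f) := (tensorLeft X).map_epi f
instance (X : C) {Y Z : C} (f : Y ⟶ Z) [Mono f] : Mono (f ▷ X) := (tensorRight X).map_mono f

instance {X Y Z W : C} (f : X ⟶ Y) (g : Z ⟶ W) [Mono f] [Mono g] : Mono (f ⊗ₘ g) := by
  rw [MonoidalCategory.tensorHom_def]; infer_instance

/-- `(𝟙_ C)ᘁ` is `𝟙_ C` itself, with the unitors as (co)evaluation, so the first factor is an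
identity up to unitors. -/
def unitToDual {V : C} (i : V ⟶ 𝟙_ C) : 𝟙_ C ⟶ Vᘁ :=
  (η_ (𝟙_ C) ((𝟙_ C)ᘁ) ≫ (λ_ ((𝟙_ C)ᘁ)).hom) ≫ iᘁ

lemma unitToDual_whiskerRight_comp_evaluation {V : C} (i : V ⟶ 𝟙_ C) :
    unitToDual i ▷ V ≫ ε_ V (Vᘁ) = (λ_ V).hom ≫ i := by
  rw [unitToDual, comp_whiskerRight, Category.assoc, rightAdjointMate_comp_evaluation]
  show ((ρ_ (𝟙_ C)).inv ≫ (λ_ (𝟙_ C)).hom) ▷ V ≫ 𝟙_ C ◁ i ≫ (ρ_ (𝟙_ C)).hom = (λ_ V).hom ≫ i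
  simp [unitors_equal, unitors_inv_equal]

variable [HasZeroMorphisms C]

lemma zero_whiskerRight (X : C) {Y Z : C} : (0 : Y ⟶ Z) ▷ X = 0 := (tensorRight X).map_zero Y Z

lemma isZero_tensor_of_left {X : C} (hX : IsZero X) (Y : C) : IsZero (X ⊗ Y) :=
  (tensorRight Y).map_isZero hX

lemma isZero_tensor_of_right (X : C) {Y : C} (hY : IsZero Y) : IsZero (X ⊗ Y) :=
  (tensorLeft X).map_isZero hY

lemma isZero_rightDual {X : C} (hX : IsZero X) : IsZero (Xᘁ) := by
  have h : IsZero (Xᘁ ⊗ 𝟙_ C) := by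
    rw [IsZero.iff_id_eq_zero]
    exact (tensorLeftHomEquiv _ X (Xᘁ) _).injective
      ((isZero_tensor_of_left hX _).eq_of_tgt _ _)
  exact h.of_iso (ρ_ _).symm

lemma isZero_of_isZero_rightDual_tensor {X : C} (h : IsZero (Xᘁ ⊗ X)) : IsZero X := by
  have zigzag := ExactPairing.evaluation_coevaluation X (Xᘁ)
  rw [(isZero_tensor_of_right X h).eq_zero_of_src (X ◁ ε_ X (Xᘁ)), comp_zero] at zigzag
  rw [IsZero.iff_id_eq_zero]
  calc 𝟙 X = (λ_ X).inv ≫ ((λ_ X).hom ≫ (ρ_ X).inv) ≫ (ρ_ X).hom := by simp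
    _ = 0 := by rw [← zigzag]; simp

end Rigid

section Abelian

variable {C : Type*} [Category C] [Abelian C] [MonoidalCategory C] [RigidCategory C]

lemma isZero_tensor_cokernel_of_mono {Z : C} (m : Z ⟶ 𝟙_ C) [Mono m] :
    IsZero (Z ⊗ cokernel m) := by
  have h : Z ◁ cokernel.π m ≫ m ▷ cokernel m = 0 := by
    rw [whisker_exchange]
    simp [unitors_equal]
  exact IsZero.of_epi_eq_zero _ (zero_of_comp_mono _ h)

instance epi_whiskerLeft_of_mono {Z : C} (m : Z ⟶ 𝟙_ C) [Mono m] : Epi (Z ◁ m) :=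
  Preadditive.epi_of_isZero_cokernel _
    ((isZero_tensor_cokernel_of_mono m).of_iso (PreservesCokernel.iso (tensorLeft Z) m).symm)

lemma isZero_of_isZero_tensor_self {Z : C} (m : Z ⟶ 𝟙_ C) [Mono m] (h : IsZero (Z ⊗ Z)) :
    IsZero Z :=
  (h.of_epi (Z ◁ m)).of_iso (ρ_ Z).symm

lemma mono_comp_cokernel_π_of_isZero_tensor {V K : C} (i : V ⟶ 𝟙_ C) [Mono i]
    (k : K ⟶ 𝟙_ C) [Mono k] (h : IsZero (K ⊗ V)) : Mono (k ≫ cokernel.π i) := by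
  let w := kernel.ι (k ≫ cokernel.π i)
  have hw : (w ≫ k) ≫ cokernel.π i = 0 := by simp [w]
  have : Mono (Abelian.monoLift i _ hw) := mono_of_mono_fac (Abelian.monoLift_comp i _ hw)
  have hWW : IsZero (kernel (k ≫ cokernel.π i) ⊗ kernel (k ≫ cokernel.π i)) :=
    h.of_mono (w ⊗ₘ Abelian.monoLift i _ hw)
  exact Preadditive.mono_of_isZero_kernel _ (isZero_of_isZero_tensor_self (w ≫ k) hWW)

lemma isZero_of_isZero_tensor_of_mono_of_epi {V P Q : C} (j : P ⟶ Vᘁ) [Mono j]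
    (q : P ⟶ Q) [Epi q] (h : IsZero (V ⊗ Q)) : IsZero Q := by
  have hQV : IsZero (Qᘁ ⊗ Vᘁ) := (isZero_rightDual h).of_iso (rightDualTensorIso V Q).symm
  have hQP : IsZero (Qᘁ ⊗ P) := hQV.of_mono (Qᘁ ◁ j)
  exact isZero_of_isZero_rightDual_tensor (hQP.of_epi (Qᘁ ◁ q))

lemma epi_biprod_desc_kernel_ι {V : C} (i : V ⟶ 𝟙_ C) [Mono i] (φ : 𝟙_ C ⟶ Vᘁ) :
    Epi (biprod.desc i (kernel.ι φ)) := by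
  set Q := cokernel (biprod.desc i (kernel.ι φ))
  have hVQ : IsZero (V ⊗ Q) :=
    (isZero_tensor_cokernel_of_mono i).of_epi
      (V ◁ cokernel.desc i _ (biprod.left_comp_cokernel_π_desc _ _))
  exact Preadditive.epi_of_isZero_cokernel _
    (isZero_of_isZero_tensor_of_mono_of_epi (Abelian.factorThruCoimage φ)
      (cokernel.desc (kernel.ι φ) _ (biprod.right_comp_cokernel_π_desc _ _)) hVQ)

lemma isZero_kernel_unitToDual_tensor {V : C} (i : V ⟶ 𝟙_ C) [Mono i] :
    IsZero (kernel (unitToDual i) ⊗ V) := by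
  refine IsZero.of_mono_eq_zero (kernel.ι (unitToDual i) ▷ V) ?_
  refine zero_of_comp_mono ((λ_ V).hom ≫ i) ?_
  rw [← unitToDual_whiskerRight_comp_evaluation, ← Category.assoc, ← comp_whiskerRight,
    kernel.condition, zero_whiskerRight, zero_comp]

end Abelian

end CategoryTheory.RigidCategory

theorem unit_decomposes_subobject_perp_general
    {A : Type*} [Category A] [Abelian A]
    [MonoidalCategory A] [RigidCategory A] (U : Subobject (𝟙_ A)) :
    IsIso (biprod.desc U.arrow
      (kernel.ι ((η_ (𝟙_ A) ((𝟙_ A)ᘁ) ≫ (λ_ ((𝟙_ A)ᘁ)).hom) ≫ (U.arrow)ᘁ))) := by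
  let φ := RigidCategory.unitToDual U.arrow
  have : Mono (kernel.ι φ ≫ cokernel.π U.arrow) :=
    RigidCategory.mono_comp_cokernel_π_of_isZero_tensor _ _
      (RigidCategory.isZero_kernel_unitToDual_tensor U.arrow)
  have : Mono (biprod.desc U.arrow (kernel.ι φ)) := biprod.mono_desc_of_mono_comp_cokernel_π _ _
  have : Epi (biprod.desc U.arrow (kernel.ι φ)) := RigidCategory.epi_biprod_desc_kernel_ι _ _
  exact isIso_of_mono_of_epi (biprod.desc U.arrow (kernel.ι φ))

/-- In a rigid abelian symmetric monoidal category, for any subobject `U` of the unit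
object `𝟙_ A`, the unit decomposes as `U ⊕ U^⊥`, where `U^⊥` is the kernel of the
morphism `𝟙_ A ⟶ Uᘁ` obtained by dualising the inclusion `U ⟶ 𝟙_ A`. -/
theorem unit_decomposes_subobject_perp
    {A : Type*} [Category A] [Abelian A]
    [MonoidalCategory A] [SymmetricCategory A] [MonoidalPreadditive A]
    [RigidCategory A] (U : Subobject (𝟙_ A)) :
    IsIso (biprod.desc U.arrow
      (kernel.ι ((η_ (𝟙_ A) ((𝟙_ A)ᘁ) ≫ (λ_ ((𝟙_ A)ᘁ)).hom) ≫ (U.arrow)ᘁ))) :=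
  unit_decomposes_subobject_perp_general U
end

section
/- In a rigid abelian symmetric monoidal category A, every subobject U of the unit object 1 satisfies U ⊗ U ≅ U (via the canonical map). -/
open CategoryTheory CategoryTheory.Limits CategoryTheory.MonoidalCategory

/-!
Tensoring with an object that has duals on both sides is exact. Let `u : U ⟶ 𝟙` be mono with
cokernel `π : 𝟙 ⟶ Q`. By the interchange law, `(U ◁ π) ≫ (u ▷ Q)` is `u ≫ π = 0` up to unitors;
since `U ◁ π` is epi and `u ▷ Q` is mono, `U ⊗ Q = 0`. But `U ⊗ Q` is the cokernel of the mono
`U ◁ u`, which is therefore an isomorphism.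
-/

section

variable {C : Type*} [Category C] [MonoidalCategory C]

instance isLeftAdjoint_tensorLeft_of_hasLeftDual (X : C) [HasLeftDual X] :
    (tensorLeft X).IsLeftAdjoint :=
  (tensorLeftAdjunction (ᘁX) X).isLeftAdjoint

instance isRightAdjoint_tensorLeft_of_hasRightDual (X : C) [HasRightDual X] :
    (tensorLeft X).IsRightAdjoint :=
  (tensorLeftAdjunction X Xᘁ).isRightAdjoint

instance isRightAdjoint_tensorRight_of_hasLeftDual (X : C) [HasLeftDual X] :
    (tensorRight X).IsRightAdjoint :=
  (tensorRightAdjunction (ᘁX) X).isRightAdjoint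

theorem whiskerLeft_comp_whiskerRight_unit {U Q : C} (u : U ⟶ 𝟙_ C) (π : 𝟙_ C ⟶ Q) :
    U ◁ π ≫ u ▷ Q = (ρ_ U).hom ≫ u ≫ π ≫ (λ_ Q).inv := by
  rw [whisker_exchange]
  simp [← unitors_inv_equal]

variable [Abelian C]

theorem isZero_tensor_cokernel_of_mono_unit {U : C} (u : U ⟶ 𝟙_ C) [Mono u] [HasLeftDual U]
    [HasLeftDual (cokernel u)] : IsZero (U ⊗ cokernel u) := by
  have : Mono (u ▷ cokernel u) := (tensorRight (cokernel u)).map_mono u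
  have : Epi (U ◁ cokernel.π u) := (tensorLeft U).map_epi (cokernel.π u)
  refine IsZero.of_mono_eq_zero (u ▷ cokernel u) ((cancel_epi (U ◁ cokernel.π u)).mp ?_)
  simp [whiskerLeft_comp_whiskerRight_unit]

theorem epi_whiskerLeft_of_isZero_tensor_cokernel (U : C) [HasLeftDual U] {X Y : C} (f : X ⟶ Y)
    (h : IsZero (U ⊗ cokernel f)) : Epi (U ◁ f) :=
  Abelian.epi_of_cokernel_π_eq_zero _
    ((h.of_iso (PreservesCokernel.iso (tensorLeft U) f).symm).eq_of_tgt _ _)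

end

theorem subobject_unit_tensor_self_general
    {A : Type*} [Category A] [Abelian A]
    [MonoidalCategory A]
    [RigidCategory A] (U : Subobject (𝟙_ A)) :
    IsIso ((U : A) ◁ U.arrow ≫ (ρ_ (U : A)).hom) := by
  have : Mono ((U : A) ◁ U.arrow) := (tensorLeft (U : A)).map_mono U.arrow
  have : Epi ((U : A) ◁ U.arrow) :=
    epi_whiskerLeft_of_isZero_tensor_cokernel _ _ (isZero_tensor_cokernel_of_mono_unit U.arrow)
  have : IsIso ((U : A) ◁ U.arrow) := isIso_of_mono_of_epi _
  infer_instance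

/-- In a rigid abelian symmetric monoidal category, every subobject `U` of the unit
satisfies `U ⊗ U ≅ U` via the canonical map `U ⊗ U ⟶ U ⊗ 𝟙 ≅ U`. -/
theorem subobject_unit_tensor_self
    {A : Type*} [Category A] [Abelian A]
    [MonoidalCategory A] [SymmetricCategory A] [MonoidalPreadditive A]
    [RigidCategory A] (U : Subobject (𝟙_ A)) :
    IsIso ((U : A) ◁ U.arrow ≫ (ρ_ (U : A)).hom) :=
  subobject_unit_tensor_self_general U
end

section
/- Let A = A₁ × A₂ be a product of rigid abelian symmetric monoidal categories and F : A → B a ⊗-functor to an abelian ⊗-category B such that End_B(1) is a field. Then F vanishes identically on A₁ or on A₂. -/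
open CategoryTheory CategoryTheory.Limits CategoryTheory.MonoidalCategory ZeroObject

/-- The product of two preadditive categories is preadditive. -/
instance prodPreadditive {C D : Type*} [Category C] [Category D]
    [Preadditive C] [Preadditive D] : Preadditive (C × D) where
  homGroup X Y := inferInstanceAs (AddCommGroup ((X.1 ⟶ Y.1) × (X.2 ⟶ Y.2)))
  add_comp := by intros; apply Prod.ext <;> simp [Preadditive.add_comp]
  comp_add := by intros; apply Prod.ext <;> simp [Preadditive.comp_add]

lemma vanish_of_unit_endo {A : Type*} [Category A] [MonoidalCategory A]
    {B : Type*} [Category B] [Preadditive B] [MonoidalCategory B] [MonoidalPreadditive B]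
    (F : A ⥤ B) [F.Monoidal] (e : 𝟙_ A ⟶ 𝟙_ A) (he : F.map e = 0) (X : A)
    (hX : 𝟙 X = (ρ_ X).inv ≫ (X ◁ e) ≫ (ρ_ X).hom) : IsZero (F.obj X) := by
  rw [IsZero.iff_id_eq_zero, ← F.map_id, hX]
  simp [Functor.Monoidal.map_whiskerLeft, he]

/-- Let `A = A₁ × A₂` be a product of rigid abelian symmetric monoidal categories and
`F : A → B` a ⊗-functor to an abelian ⊗-category `B` such that `End_B(1)` is a field.
Then `F` vanishes identically on `A₁` or on `A₂`. -/
theorem tensor_functor_prod_vanishes_on_factor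
    {A₁ : Type*} [Category A₁] [Abelian A₁]
    [MonoidalCategory A₁] [SymmetricCategory A₁] [MonoidalPreadditive A₁]
    [RigidCategory A₁]
    {A₂ : Type*} [Category A₂] [Abelian A₂]
    [MonoidalCategory A₂] [SymmetricCategory A₂] [MonoidalPreadditive A₂]
    [RigidCategory A₂]
    {B : Type*} [Category B] [Abelian B]
    [MonoidalCategory B] [SymmetricCategory B] [MonoidalPreadditive B]
    (hB : IsField (End (𝟙_ B)))
    (F : A₁ × A₂ ⥤ B) [F.Monoidal] [F.Additive] :
    (∀ X : A₁, IsZero (F.obj (X, 0))) ∨ (∀ Y : A₂, IsZero (F.obj (0, Y))) := by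
  letI := hB.toField
  set e : 𝟙_ (A₁ × A₂) ⟶ 𝟙_ (A₁ × A₂) := (𝟙 _, 0) with he
  set e' : 𝟙_ (A₁ × A₂) ⟶ 𝟙_ (A₁ × A₂) := (0, 𝟙 _) with he'
  have hee : e ≫ e = e := by apply Prod.ext <;> simp [he]
  have hsum : e + e' = 𝟙 _ := by apply Prod.ext <;> simp [he, he']
  set ε := Functor.Monoidal.εIso F with hε
  set u : End (𝟙_ B) := ε.hom ≫ F.map e ≫ ε.inv with hu
  have hid : u * u = u := by
    show (ε.hom ≫ F.map e ≫ ε.inv) ≫ ε.hom ≫ F.map e ≫ ε.inv = u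
    rw [hu]
    simp only [Category.assoc, Iso.inv_hom_id_assoc]
    rw [← Functor.map_comp_assoc, hee]
  have : u = 0 ∨ u = 1 := IsIdempotentElem.iff_eq_zero_or_one.mp hid
  rcases this with h | h
  · left
    have hFe : F.map e = 0 := by
      rw [hu] at h
      simpa using congrArg (fun f => ε.inv ≫ f ≫ ε.hom) h
    intro X
    apply vanish_of_unit_endo F e hFe
    apply Prod.ext
    · simp [he]
    · exact (isZero_zero A₂).eq_of_src _ _
  · right
    have hFe' : F.map e' = 0 := by
      have h1 : F.map e + F.map e' = 𝟙 _ := by rw [← F.map_add, hsum, F.map_id]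
      have hFe : F.map e = 𝟙 _ := by
        rw [hu] at h
        simpa [End.one_def] using congrArg (fun f => ε.inv ≫ f ≫ ε.hom) h
      rw [hFe] at h1
      exact add_eq_left.mp h1
    intro Y
    apply vanish_of_unit_endo F e' hFe'
    apply Prod.ext
    · exact (isZero_zero A₁).eq_of_src _ _
    · simp [he']
end

section
/- Let A be a rigid abelian symmetric monoidal category whose endomorphism ring of the unit is a field, and let B be a nonzero abelian symmetric monoidal category. Then any exact ⊗-functor F : A → B is faithful. -/
open CategoryTheory CategoryTheory.Limits CategoryTheory.MonoidalCategory

noncomputable section AuxForExactTensorFunctorFaithful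

namespace ExactTensorFunctorFaithfulAux

open CategoryTheory CategoryTheory.Limits CategoryTheory.MonoidalCategory

section ZeroTensor

variable {C : Type*} [Category C] [Preadditive C] [MonoidalCategory C] [MonoidalPreadditive C]

theorem isZero_tensor_left {X : C} (hX : IsZero X) (Y : C) : IsZero (X ⊗ Y) := by
  rw [IsZero.iff_id_eq_zero] at hX ⊢
  rw [← MonoidalCategory.id_whiskerRight, hX, MonoidalPreadditive.zero_whiskerRight]

end ZeroTensor

section RigidA

universe v u

variable {A : Type u} [Category.{v} A] [Abelian A]
  [MonoidalCategory A] [SymmetricCategory A] [MonoidalPreadditive A]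
  [RigidCategory A]

instance tensorLeft_preservesFiniteLimits (W : A) : PreservesFiniteLimits (tensorLeft W) :=
  letI := (tensorLeftAdjunction W (Wᘁ)).rightAdjoint_preservesLimits
  PreservesLimitsOfSize.preservesFiniteLimits.{v, v} _

instance tensorLeft_preservesFiniteColimits (W : A) : PreservesFiniteColimits (tensorLeft W) :=
  letI : ExactPairing (Wᘁ) W := BraidedCategory.exactPairing_swap W (Wᘁ)
  letI := (tensorLeftAdjunction (Wᘁ) W).leftAdjoint_preservesColimits
  PreservesColimitsOfSize.preservesFiniteColimits.{v, v} _

instance tensorRight_preservesFiniteLimits (W : A) : PreservesFiniteLimits (tensorRight W) :=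
  letI : ExactPairing (Wᘁ) W := BraidedCategory.exactPairing_swap W (Wᘁ)
  letI := (tensorRightAdjunction (Wᘁ) W).rightAdjoint_preservesLimits
  PreservesLimitsOfSize.preservesFiniteLimits.{v, v} _

instance tensorRight_preservesFiniteColimits (W : A) : PreservesFiniteColimits (tensorRight W) :=
  letI := (tensorRightAdjunction W (Wᘁ)).leftAdjoint_preservesColimits
  PreservesColimitsOfSize.preservesFiniteColimits.{v, v} _

/-- Key lemma: in a rigid abelian symmetric monoidal category with `End 𝟙` a field,
any monomorphism from a nonzero object into the unit is an isomorphism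
(i.e. the unit is a simple object). -/
theorem isIso_of_mono_unit (hA : IsField (End (𝟙_ A))) {U : A} (j : U ⟶ 𝟙_ A) [Mono j]
    (hU : ¬ IsZero U) :
    IsIso j := by
  let V : A := cokernel j
  let q : 𝟙_ A ⟶ V := cokernel.π j
  -- Step 1 : U ⊗ V = 0
  have step1 : IsZero (U ⊗ V) := by
    have key : (U ◁ q) ≫ ((j ▷ V) ≫ (λ_ V).hom) = 0 := by
      rw [whisker_exchange_assoc j q, MonoidalCategory.leftUnitor_naturality,
        unitors_equal, MonoidalCategory.rightUnitor_naturality_assoc,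
        cokernel.condition, comp_zero]
    have hepi : Epi (U ◁ q) := (tensorLeft U).map_epi q
    have hz : (j ▷ V) ≫ (λ_ V).hom = 0 := zero_of_epi_comp _ key
    have hm1 : Mono (j ▷ V) := (tensorRight V).map_mono j
    have hm2 : Mono ((j ▷ V) ≫ (λ_ V).hom) := mono_comp _ _
    exact IsZero.of_mono_eq_zero _ hz
  -- the "mate" of q
  let qd : (Vᘁ) ⟶ 𝟙_ A := (ρ_ (Vᘁ)).inv ≫ ((Vᘁ) ◁ q) ≫ ε_ V (Vᘁ)
  -- Step 2 : qd is "mono on elements"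
  have step2 : ∀ {T : A} (g : T ⟶ (Vᘁ)), g ≫ qd = 0 → g = 0 := by
    intro T g hg
    have h1 : (ρ_ T).inv ≫ (T ◁ q) ≫ ((g ▷ V) ≫ ε_ V (Vᘁ)) = 0 := by
      rw [whisker_exchange_assoc g q, ← MonoidalCategory.rightUnitor_inv_naturality_assoc]
      simpa [qd, Category.assoc] using hg
    have hepi : Epi (T ◁ q) := (tensorLeft T).map_epi q
    have h2 : (g ▷ V) ≫ ε_ V (Vᘁ) = 0 := by
      have h1' : (T ◁ q) ≫ ((g ▷ V) ≫ ε_ V (Vᘁ)) = 0 := by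
        have := (cancel_epi (ρ_ T).inv).1 (by simpa using h1)
        simpa using this
      exact zero_of_epi_comp (T ◁ q) h1'
    -- recover g from its transform
    have recov : (ρ_ T).inv ≫ (T ◁ η_ V (Vᘁ)) ≫ (α_ T V (Vᘁ)).inv ≫
        (((g ▷ V) ≫ ε_ V (Vᘁ)) ▷ (Vᘁ)) ≫ (λ_ (Vᘁ)).hom = g := by
      calc _ = 𝟙 T ⊗≫ (T ◁ η_ V (Vᘁ) ≫ g ▷ (V ⊗ (Vᘁ))) ⊗≫ ε_ V (Vᘁ) ▷ (Vᘁ) ⊗≫ 𝟙 (Vᘁ) := by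
              rw [MonoidalCategory.comp_whiskerRight]; monoidal
        _ = g ⊗≫ ((Vᘁ) ◁ η_ V (Vᘁ) ⊗≫ ε_ V (Vᘁ) ▷ (Vᘁ)) ⊗≫ 𝟙 (Vᘁ) := by
              rw [whisker_exchange]; monoidal
        _ = g := by rw [ExactPairing.coevaluation_evaluation'']; monoidal
    rw [← recov, h2]
    simp
  have hqd : Mono qd := Preadditive.mono_of_cancel_zero qd step2
  -- Step 3 : U ⊗ Vᘁ = 0
  have step3 : IsZero (U ⊗ (Vᘁ)) := by
    have hz : (U ◁ qd) = 0 := by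
      have hm : (U ◁ qd) ≫ ((ρ_ U).hom ≫ j) = 0 := by
        rw [← MonoidalCategory.rightUnitor_naturality, whisker_exchange_assoc j qd,
          ← unitors_equal, MonoidalCategory.leftUnitor_naturality]
        have hβ : (λ_ (Vᘁ)).hom ≫ (ρ_ (Vᘁ)).inv = (β_ (𝟙_ A) (Vᘁ)).hom := by
          rw [← braiding_rightUnitor (C := A) (Vᘁ)]
          simp
        show (j ▷ (Vᘁ)) ≫ (λ_ (Vᘁ)).hom ≫ (ρ_ (Vᘁ)).inv ≫ ((Vᘁ) ◁ q) ≫ ε_ V (Vᘁ) = 0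
        slice_lhs 2 3 => rw [hβ]
        rw [Category.assoc, BraidedCategory.braiding_naturality_left_assoc j (Vᘁ),
          ← MonoidalCategory.whiskerLeft_comp_assoc, cokernel.condition]
        simp
      have hmono1 : Mono ((ρ_ U).hom ≫ j) := mono_comp _ _
      exact zero_of_comp_mono _ hm
    have : Mono (U ◁ qd) := (tensorLeft U).map_mono qd
    exact IsZero.of_mono_eq_zero _ hz
  -- Step 4 : q ▷ Vᘁ is iso
  have hepi4 : Epi (q ▷ (Vᘁ)) := (tensorRight (Vᘁ)).map_epi q
  have hmono4 : Mono (q ▷ (Vᘁ)) := by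
    let S : ShortComplex A := ShortComplex.mk j q (cokernel.condition j)
    have hS : S.ShortExact :=
      { exact := S.exact_of_g_is_cokernel (cokernelIsCokernel j)
        mono_f := ‹Mono j›
        epi_g := by dsimp [S]; infer_instance }
    have hS' : (S.map (tensorRight (Vᘁ))).ShortExact := hS.map_of_exact (tensorRight (Vᘁ))
    exact hS'.exact.mono_g (step3.eq_of_src _ 0)
  have hiso4 : IsIso (q ▷ (Vᘁ)) := isIso_of_mono_of_epi _
  -- Step 5 : the scalar σ
  let y : 𝟙_ A ⟶ (Vᘁ) := η_ V (Vᘁ) ≫ inv (q ▷ (Vᘁ)) ≫ (λ_ (Vᘁ)).hom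
  let σ : End (𝟙_ A) := y ≫ qd
  have hσ : σ = 0 := by
    by_contra hσ0
    obtain ⟨τ, hτ⟩ := hA.mul_inv_cancel hσ0
    -- build a splitting of q
    let s : V ⟶ 𝟙_ A := (λ_ V).inv ≫ (y ▷ V) ≫ ε_ V (Vᘁ)
    have hqs : q ≫ s = σ := by
      have e : ((Vᘁ) ◁ q) ≫ ε_ V (Vᘁ) = (ρ_ (Vᘁ)).hom ≫ qd := by simp [qd]
      show q ≫ (λ_ V).inv ≫ (y ▷ V) ≫ ε_ V (Vᘁ) = y ≫ qd
      rw [MonoidalCategory.leftUnitor_inv_naturality_assoc, whisker_exchange_assoc y q,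
        e, MonoidalCategory.rightUnitor_naturality_assoc, ← unitors_equal]
      simp
    have hq1 : q ≫ (s ≫ τ) = 𝟙 _ := by
      rw [← Category.assoc, hqs]
      have : σ * τ = τ * σ := hA.mul_comm σ τ
      rw [this] at hτ
      exact hτ
    have hmq : Mono q := by
      have : Mono (q ≫ (s ≫ τ)) := by rw [hq1]; infer_instance
      exact mono_of_mono q (s ≫ τ)
    have hj0 : j = 0 := by
      have := cokernel.condition j
      rwa [show (0 : U ⟶ V) = 0 ≫ q by simp, cancel_mono q] at this
    exact hU (IsZero.of_mono_eq_zero j hj0)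
  -- Step 6 : conclude V = 0
  have hy0 : y = 0 := step2 y hσ
  have hη0 : η_ V (Vᘁ) = 0 := by
    have : η_ V (Vᘁ) = y ≫ (λ_ (Vᘁ)).inv ≫ (q ▷ (Vᘁ)) := by simp [y]
    rw [this, hy0, zero_comp]
  have hV : IsZero V := by
    rw [IsZero.iff_id_eq_zero]
    have zig := ExactPairing.evaluation_coevaluation V (Vᘁ)
    rw [hη0] at zig
    simp only [MonoidalPreadditive.zero_whiskerRight, zero_comp] at zig
    calc 𝟙 V = (λ_ V).inv ≫ ((λ_ V).hom ≫ (ρ_ V).inv) ≫ (ρ_ V).hom := by simp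
    _ = 0 := by rw [← zig]; simp
  have hq0 : q = 0 := hV.eq_of_tgt q 0
  have : Epi j := Preadditive.epi_of_isZero_cokernel j hV
  exact isIso_of_mono_of_epi j

end RigidA

end ExactTensorFunctorFaithfulAux

end AuxForExactTensorFunctorFaithful

/-- Let `A` be a rigid abelian symmetric monoidal category whose endomorphism ring of
the unit is a field, and `B` a nonzero abelian symmetric monoidal category. Then any
exact ⊗-functor `F : A ⥤ B` is faithful. -/
theorem exact_tensor_functor_faithful
    {A : Type*} [Category A] [Abelian A]
    [MonoidalCategory A] [SymmetricCategory A] [MonoidalPreadditive A]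
    [RigidCategory A] (hA : IsField (End (𝟙_ A)))
    {B : Type*} [Category B] [Abelian B]
    [MonoidalCategory B] [SymmetricCategory B] [MonoidalPreadditive B]
    (hB : ∃ X : B, ¬ IsZero X)
    (F : A ⥤ B) [F.Monoidal] [F.Additive]
    [PreservesFiniteLimits F] [PreservesFiniteColimits F] :
    F.Faithful := by
  classical
  open ExactTensorFunctorFaithfulAux in
  -- the unit of `B` is not zero
  have h1B : ¬ IsZero (𝟙_ B) := by
    intro h
    obtain ⟨X, hX⟩ := hB
    exact hX ((isZero_tensor_left h X).of_iso (λ_ X).symm)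
  have hF1 : ¬ IsZero (F.obj (𝟙_ A)) := fun h => h1B (h.of_iso (Functor.Monoidal.εIso F))
  -- key step : `F` does not kill nonzero objects
  have key : ∀ X : A, ¬ IsZero X → ¬ IsZero (F.obj X) := by
    intro X hX hFX
    have hη0 : η_ X (Xᘁ) ≠ 0 := by
      intro h
      apply hX
      rw [IsZero.iff_id_eq_zero]
      have zig := ExactPairing.evaluation_coevaluation X (Xᘁ)
      rw [h] at zig
      simp only [MonoidalPreadditive.zero_whiskerRight, zero_comp] at zig
      calc 𝟙 X = (λ_ X).inv ≫ ((λ_ X).hom ≫ (ρ_ X).inv) ≫ (ρ_ X).hom := by simp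
      _ = 0 := by rw [← zig]; simp
    have hK : IsZero (kernel (η_ X (Xᘁ))) := by
      by_contra hK
      have := ExactTensorFunctorFaithfulAux.isIso_of_mono_unit hA (kernel.ι (η_ X (Xᘁ))) hK
      apply hη0
      rw [← cancel_epi (kernel.ι (η_ X (Xᘁ))), kernel.condition, comp_zero]
    have hmono : Mono (η_ X (Xᘁ)) := Preadditive.mono_of_isZero_kernel _ hK
    have hFmono : Mono (F.map (η_ X (Xᘁ))) := F.map_mono _
    have hFXXd : IsZero (F.obj (X ⊗ (Xᘁ))) :=
      (isZero_tensor_left hFX (F.obj (Xᘁ))).of_iso (Functor.Monoidal.μIso F X (Xᘁ)).symm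
    have hz : F.map (η_ X (Xᘁ)) = 0 := hFXXd.eq_of_tgt _ 0
    exact hF1 (IsZero.of_mono_eq_zero _ hz)
  -- conclude faithfulness
  refine ⟨fun {X Y f g} h => ?_⟩
  rw [← sub_eq_zero]
  by_contra hd
  set d := f - g with hdef
  have hFd : F.map d = 0 := by rw [hdef, F.map_sub, h, sub_self]
  have h1 : F.map (factorThruImage d) ≫ F.map (image.ι d) = 0 := by
    rw [← F.map_comp, image.fac d, hFd]
  have hepi : Epi (F.map (factorThruImage d)) := F.map_epi _
  have h2 : F.map (image.ι d) = 0 := zero_of_epi_comp _ h1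
  have hmono : Mono (F.map (image.ι d)) := F.map_mono _
  have h3 : IsZero (F.obj (image d)) := IsZero.of_mono_eq_zero _ h2
  have h4 : ¬ IsZero (image d) := by
    intro hI
    apply hd
    rw [← image.fac d, hI.eq_of_src (image.ι d) 0, comp_zero]
  exact key _ h4 h3
end

section
/- Every rigid abelian symmetric monoidal category is reduced: if f is a morphism with f ⊗ f = 0, then f = 0. In particular, the commutative ring End(1) is reduced. -/
open CategoryTheory CategoryTheory.Limits CategoryTheory.MonoidalCategory

/-!
In a rigid category tensoring with a fixed object has adjoints on both sides, so it preserves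
monomorphisms and epimorphisms. Factor `f = e ≫ m` through its image `I`: then `f ⊗ f = 0` forces
the monomorphism `m ⊗ m` to vanish, so `I ⊗ I = 0`. By the braiding `I ⊗ ᘁI ⊗ I ≅ (I ⊗ I) ⊗ ᘁI = 0`,
and the zigzag identity makes `I` a retract of `I ⊗ ᘁI ⊗ I`; hence `I = 0` and `f = 0`.
On `End (𝟙_ A)` tensor product and composition agree up to the unitors, so `x * x = 0` gives
`x = 0`.
-/

namespace CategoryTheory.MonoidalCategory

variable {C : Type*} [Category C] [MonoidalCategory C]

section Rigid

lemma mono_whiskerRight {X Y : C} (f : X ⟶ Y) [Mono f] (Z : C) [HasLeftDual Z] :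
    Mono (f ▷ Z) :=
  have := Functor.preservesMonomorphisms_of_adjunction (tensorRightAdjunction (ᘁZ) Z)
  (tensorRight Z).map_mono f

lemma mono_whiskerLeft (Z : C) [HasRightDual Z] {X Y : C} (f : X ⟶ Y) [Mono f] :
    Mono (Z ◁ f) :=
  have := Functor.preservesMonomorphisms_of_adjunction (tensorLeftAdjunction Z (Zᘁ))
  (tensorLeft Z).map_mono f

lemma epi_whiskerRight {X Y : C} (f : X ⟶ Y) [Epi f] (Z : C) [HasRightDual Z] :
    Epi (f ▷ Z) :=
  have := Functor.preservesEpimorphisms_of_adjunction (tensorRightAdjunction Z (Zᘁ))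
  (tensorRight Z).map_epi f

lemma epi_whiskerLeft (Z : C) [HasLeftDual Z] {X Y : C} (f : X ⟶ Y) [Epi f] :
    Epi (Z ◁ f) :=
  have := Functor.preservesEpimorphisms_of_adjunction (tensorLeftAdjunction (ᘁZ) Z)
  (tensorLeft Z).map_epi f

variable [RigidCategory C]

lemma mono_tensorHom {X Y X' Y' : C} (f : X ⟶ Y) (g : X' ⟶ Y') [Mono f] [Mono g] :
    Mono (f ⊗ₘ g) := by
  have := mono_whiskerRight f X'
  have := mono_whiskerLeft Y g
  rw [tensorHom_def]
  exact mono_comp _ _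

lemma epi_tensorHom {X Y X' Y' : C} (f : X ⟶ Y) (g : X' ⟶ Y') [Epi f] [Epi g] :
    Epi (f ⊗ₘ g) := by
  have := epi_whiskerRight f X'
  have := epi_whiskerLeft Y g
  rw [tensorHom_def]
  exact epi_comp _ _

end Rigid

def retractTensorTensor (Y X : C) [ExactPairing Y X] : Retract X (X ⊗ Y ⊗ X) where
  i := (ρ_ X).inv ≫ X ◁ η_ Y X
  r := (α_ X Y X).inv ≫ ε_ Y X ▷ X ≫ (λ_ X).hom
  retract := by simp [reassoc_of% ExactPairing.coevaluation_evaluation]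

lemma isZero_of_isZero_tensor_self [BraidedCategory C] [Preadditive C] [MonoidalPreadditive C]
    {X : C} [HasLeftDual X] (h : IsZero (X ⊗ X)) : IsZero X := by
  have hXYX : IsZero (X ⊗ (ᘁX) ⊗ X) :=
    ((tensorRight (ᘁX)).map_isZero h).of_iso (whiskerLeftIso X (β_ (ᘁX) X) ≪≫ (α_ X X (ᘁX)).symm)
  exact hXYX.of_mono (retractTensorTensor (ᘁX) X).i

lemma eq_zero_of_tensorHom_self_eq_zero [Abelian C] [BraidedCategory C] [MonoidalPreadditive C]
    [RigidCategory C] {X Y : C} (f : X ⟶ Y) (h : f ⊗ₘ f = 0) : f = 0 := by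
  have fac := Abelian.image.fac f
  set e := Abelian.factorThruImage f
  set m := Abelian.image.ι f
  have := epi_tensorHom e e
  have := mono_tensorHom m m
  have hm : m ⊗ₘ m = 0 := by
    rw [← cancel_epi (e ⊗ₘ e), tensorHom_comp_tensorHom, fac, h, comp_zero]
  have hI : IsZero (Abelian.image f) := isZero_of_isZero_tensor_self (IsZero.of_mono_eq_zero _ hm)
  rw [← fac, hI.eq_zero_of_src m, comp_zero]

lemma unit_tensorHom_eq_comp (f g : 𝟙_ C ⟶ 𝟙_ C) :
    f ⊗ₘ g = (λ_ (𝟙_ C)).hom ≫ (f ≫ g) ≫ (λ_ (𝟙_ C)).inv := by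
  simp [tensorHom_def, unitors_equal]

end CategoryTheory.MonoidalCategory

/-- Every rigid abelian symmetric monoidal category is reduced: `f ⊗ₘ f = 0` implies
`f = 0`. In particular the ring `End(1)` is reduced. -/
theorem rigid_abelian_reduced
    {A : Type*} [Category A] [Abelian A]
    [MonoidalCategory A] [SymmetricCategory A] [MonoidalPreadditive A]
    [RigidCategory A] :
    (∀ {X Y : A} (f : X ⟶ Y), f ⊗ₘ f = 0 → f = 0) ∧ IsReduced (End (𝟙_ A)) := by
  refine ⟨eq_zero_of_tensorHom_self_eq_zero, (isReduced_iff_pow_one_lt 2 one_lt_two).2 ?_⟩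
  intro x hx
  apply eq_zero_of_tensorHom_self_eq_zero x
  have hxx : x ≫ x = 0 := by rwa [sq] at hx
  rw [unit_tensorHom_eq_comp, hxx, zero_comp, comp_zero]
end

section
/- In a rigid abelian symmetric monoidal category A, if End(1) is an integral domain then End(1) is a field. -/
open CategoryTheory CategoryTheory.Limits CategoryTheory.MonoidalCategory

section Aux

variable {A : Type*} [Category A] [Abelian A]
    [MonoidalCategory A] [SymmetricCategory A] [MonoidalPreadditive A]
    [RigidCategory A]

namespace EndUnitFieldAux

noncomputable instance (X : A) : PreservesColimitsOfSize.{0, 0} (tensorLeft X) :=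
  (tensorLeftAdjunction (ᘁX) X).leftAdjoint_preservesColimits

noncomputable instance (X : A) : PreservesLimitsOfSize.{0, 0} (tensorLeft X) :=
  (tensorLeftAdjunction X (Xᘁ)).rightAdjoint_preservesLimits

noncomputable instance (X : A) : PreservesColimitsOfSize.{0, 0} (tensorRight X) :=
  (tensorRightAdjunction X (Xᘁ)).leftAdjoint_preservesColimits

noncomputable instance (X : A) : PreservesLimitsOfSize.{0, 0} (tensorRight X) :=
  (tensorRightAdjunction (ᘁX) X).rightAdjoint_preservesLimits

@[simp] lemma tensorLeft_map' (X : A) {Y Z : A} (f : Y ⟶ Z) :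
    (tensorLeft X).map f = X ◁ f := rfl

@[simp] lemma tensorRight_map' (X : A) {Y Z : A} (f : Y ⟶ Z) :
    (tensorRight X).map f = f ▷ X := rfl

lemma hom_zero_of_target {X Y : A} (h : 𝟙 Y = 0) (f : X ⟶ Y) : f = 0 := by
  rw [← Category.comp_id f, h, comp_zero]

lemma hom_zero_of_source {X Y : A} (h : 𝟙 X = 0) (f : X ⟶ Y) : f = 0 := by
  rw [← Category.id_comp f, h, zero_comp]

lemma id_zero_of_epi {X Y : A} (e : X ⟶ Y) [Epi e] (h : 𝟙 X = 0) : 𝟙 Y = 0 := by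
  rw [← cancel_epi e, Category.comp_id, comp_zero, hom_zero_of_source h e]

lemma id_zero_of_mono {X Y : A} (m : X ⟶ Y) [Mono m] (h : 𝟙 Y = 0) : 𝟙 X = 0 := by
  rw [← cancel_mono m, Category.id_comp, zero_comp, hom_zero_of_target h m]

/-- The key vanishing lemma: if `f : S ⟶ 𝟙` is mono, `g : 𝟙 ⟶ T` is epi and `f ≫ g = 0`,
then `S ⊗ T = 0`. -/
lemma key_zero {S T : A} (f : S ⟶ 𝟙_ A) (g : 𝟙_ A ⟶ T) [Mono f] [Epi g]
    (hfg : f ≫ g = 0) : 𝟙 (S ⊗ T) = 0 := by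
  haveI hepi : Epi (S ◁ g) := (tensorLeft S).map_epi g
  haveI hmono : Mono (f ▷ T) := (tensorRight T).map_mono f
  have hcomp : (S ◁ g) ≫ (f ▷ T) = 0 := by
    rw [whisker_exchange f g, MonoidalCategory.whiskerRight_id, MonoidalCategory.id_whiskerLeft]
    simp only [Category.assoc, unitors_equal, Iso.inv_hom_id_assoc]
    rw [reassoc_of% hfg]
    simp
  have hf0 : f ▷ T = 0 := by
    rw [← cancel_epi (S ◁ g), hcomp, comp_zero]
  rw [← cancel_mono (f ▷ T), Category.id_comp, zero_comp, hf0]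

lemma epi_of_cofork {X Y Z : A} {u : X ⟶ Y} {v : Y ⟶ Z} (w : u ≫ v = 0)
    (hl : IsColimit (CokernelCofork.ofπ v w)) (hv : v = 0) : Epi u := by
  refine Preadditive.epi_of_cancel_zero _ (fun {Z'} g hg => ?_)
  obtain ⟨l, hl'⟩ := CokernelCofork.IsColimit.desc' hl g hg
  rw [← hl']
  simp only [Cofork.π_ofπ, hv, zero_comp]

/-- A subobject of the unit whose self-tensor-square vanishes is zero. -/
lemma id_zero_of_sub {T : A} (j : T ⟶ 𝟙_ A) [Mono j] (h : 𝟙 (T ⊗ T) = 0) :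
    𝟙 T = 0 := by
  have hTQ : 𝟙 (T ⊗ cokernel j) = 0 :=
    key_zero j (cokernel.π j) (cokernel.condition j)
  have hl := isColimitCoforkMapOfIsColimit' (tensorLeft T) (cokernel.condition j)
      (cokernelIsCokernel j)
  haveI : Epi (T ◁ j) := by
    have e := epi_of_cofork _ hl (hom_zero_of_target hTQ _)
    simpa using e
  have h1 : 𝟙 (T ⊗ 𝟙_ A) = 0 := id_zero_of_epi (T ◁ j) h
  exact id_zero_of_epi (ρ_ T).hom h1

/-- A quotient of the unit whose self-tensor-square vanishes is zero. -/
lemma id_zero_of_quot {W : A} (p : 𝟙_ A ⟶ W) [Epi p] (h : 𝟙 (W ⊗ W) = 0) :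
    𝟙 W = 0 := by
  have hKW : 𝟙 (kernel p ⊗ W) = 0 := key_zero (kernel.ι p) p (kernel.condition p)
  have hWK : 𝟙 (W ⊗ kernel p) = 0 := id_zero_of_mono (β_ W (kernel p)).hom hKW
  have hco := Abelian.epiIsCokernelOfKernel
      (KernelFork.ofι (kernel.ι p) (kernel.condition p)) (kernelIsKernel p)
  have hl := isColimitCoforkMapOfIsColimit' (tensorLeft W)
      (KernelFork.condition _) hco
  haveI : Epi (W ◁ kernel.ι p) := by
    have e := epi_of_cofork _ hl (hom_zero_of_target h _)
    simpa using e
  have h1 : 𝟙 (W ⊗ 𝟙_ A) = 0 := id_zero_of_epi (W ◁ kernel.ι p) hWK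
  exact id_zero_of_epi (ρ_ W).hom h1

lemma end_comm (a b : 𝟙_ A ⟶ 𝟙_ A) : a ≫ b = b ≫ a := by
  have h2 : ∀ x y : 𝟙_ A ⟶ 𝟙_ A, (x ▷ 𝟙_ A) ≫ (𝟙_ A ◁ y)
      = (ρ_ (𝟙_ A)).hom ≫ (x ≫ y) ≫ (ρ_ (𝟙_ A)).inv := by
    intro x y
    rw [MonoidalCategory.whiskerRight_id, MonoidalCategory.id_whiskerLeft]
    simp only [Category.assoc, unitors_equal, unitors_inv_equal, Iso.inv_hom_id_assoc]
  have h3 : ∀ x y : 𝟙_ A ⟶ 𝟙_ A, (𝟙_ A ◁ y) ≫ (x ▷ 𝟙_ A)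
      = (ρ_ (𝟙_ A)).hom ≫ (y ≫ x) ≫ (ρ_ (𝟙_ A)).inv := by
    intro x y
    rw [MonoidalCategory.whiskerRight_id, MonoidalCategory.id_whiskerLeft]
    simp only [Category.assoc, unitors_equal, unitors_inv_equal, Iso.inv_hom_id_assoc]
  have h1 := whisker_exchange a b
  rw [h2 a b, h3 a b] at h1
  calc a ≫ b
      = (ρ_ (𝟙_ A)).inv ≫ ((ρ_ (𝟙_ A)).hom ≫ (a ≫ b) ≫ (ρ_ (𝟙_ A)).inv) ≫ (ρ_ (𝟙_ A)).hom := by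
        simp
    _ = (ρ_ (𝟙_ A)).inv ≫ ((ρ_ (𝟙_ A)).hom ≫ (b ≫ a) ≫ (ρ_ (𝟙_ A)).inv) ≫ (ρ_ (𝟙_ A)).hom := by
        rw [← h1]
    _ = b ≫ a := by simp

set_option maxHeartbeats 1000000 in
lemma isIso_of_ne_zero (hdom : IsDomain (End (𝟙_ A))) (f : 𝟙_ A ⟶ 𝟙_ A) (hf : f ≠ 0) :
    IsIso f := by
  haveI := hdom
  haveI : NoZeroDivisors (End (𝟙_ A)) := IsDomain.to_noZeroDivisors (End (𝟙_ A))
  set ι := kernel.ι f with hιdef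
  set g := Abelian.factorThruCoimage f with hgdef
  have hfac : Abelian.coimage.π f ≫ g = f := Abelian.coimage.fac f
  -- the two vanishing statements
  have hKQ : 𝟙 (kernel f ⊗ Abelian.coimage f) = 0 :=
    key_zero ι (cokernel.π ι) (cokernel.condition ι)
  have hQC : 𝟙 (Abelian.coimage f ⊗ cokernel g) = 0 :=
    key_zero g (cokernel.π g) (cokernel.condition g)
  -- the intersection of `kernel f` and the coimage is zero
  have hX : 𝟙 (pullback ι g) = 0 := by
    haveI : Mono (pullback.fst ι g ▷ pullback ι g) :=
      (tensorRight (pullback ι g)).map_mono (pullback.fst ι g)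
    haveI : Mono (kernel f ◁ pullback.snd ι g) :=
      (tensorLeft (kernel f)).map_mono (pullback.snd ι g)
    haveI : Mono ((pullback.fst ι g ▷ pullback ι g) ≫ (kernel f ◁ pullback.snd ι g)) :=
      mono_comp _ _
    have hXX : 𝟙 (pullback ι g ⊗ pullback ι g) = 0 :=
      id_zero_of_mono ((pullback.fst ι g ▷ pullback ι g) ≫ (kernel f ◁ pullback.snd ι g)) hKQ
    haveI : Mono (pullback.fst ι g ≫ ι) := mono_comp _ _
    exact id_zero_of_sub (pullback.fst ι g ≫ ι) hXX
  -- the sum of `kernel f` and the coimage is everything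
  set u : kernel f ⊞ Abelian.coimage f ⟶ 𝟙_ A := biprod.desc ι g with hudef
  have hιu : ι = biprod.inl ≫ u := (biprod.inl_desc ι g).symm
  have hgu : g = biprod.inr ≫ u := (biprod.inr_desc ι g).symm
  have htot : (biprod.fst ≫ ι + biprod.snd ≫ g :
      kernel f ⊞ Abelian.coimage f ⟶ 𝟙_ A) = u := by
    rw [hιu, hgu, ← Category.assoc, ← Category.assoc, ← Preadditive.add_comp, biprod.total,
      Category.id_comp]
  haveI hmono_u : Mono u := by
    refine Preadditive.mono_of_cancel_zero _ (fun {Z} z hz => ?_)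
    have hz' : (z ≫ biprod.fst) ≫ ι + (z ≫ biprod.snd) ≫ g = 0 := by
      calc (z ≫ biprod.fst) ≫ ι + (z ≫ biprod.snd) ≫ g
          = z ≫ (biprod.fst ≫ ι + biprod.snd ≫ g) := by
            rw [Preadditive.comp_add, Category.assoc, Category.assoc]
        _ = 0 := by rw [htot, hz]
    have hcomm : (z ≫ biprod.fst) ≫ ι = (-(z ≫ biprod.snd)) ≫ g := by
      rw [Preadditive.neg_comp]
      exact eq_neg_of_add_eq_zero_left hz'
    have hw : pullback.lift (z ≫ biprod.fst) (-(z ≫ biprod.snd)) hcomm = 0 :=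
      hom_zero_of_target hX _
    have h1 : z ≫ biprod.fst = 0 := by
      rw [← pullback.lift_fst (z ≫ biprod.fst) (-(z ≫ biprod.snd)) hcomm, hw, zero_comp]
    have h2 : z ≫ biprod.snd = 0 := by
      have := pullback.lift_snd (z ≫ biprod.fst) (-(z ≫ biprod.snd)) hcomm
      rw [hw, zero_comp] at this
      simpa using this.symm
    apply biprod.hom_ext <;> simp [h1, h2]
  have hWzero : 𝟙 (cokernel u) = 0 := by
    have hι0 : ι ≫ cokernel.π u = 0 := by
      rw [hιu, Category.assoc, cokernel.condition, comp_zero]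
    have hg0 : g ≫ cokernel.π u = 0 := by
      rw [hgu, Category.assoc, cokernel.condition, comp_zero]
    haveI e₁ : Epi (cokernel.desc ι (cokernel.π u) hι0) :=
      epi_of_epi_fac (cokernel.π_desc ι (cokernel.π u) hι0)
    haveI e₂ : Epi (cokernel.desc g (cokernel.π u) hg0) :=
      epi_of_epi_fac (cokernel.π_desc g (cokernel.π u) hg0)
    haveI : Epi ((cokernel.desc ι (cokernel.π u) hι0) ▷ cokernel g) :=
      (tensorRight (cokernel g)).map_epi _
    haveI : Epi ((cokernel u) ◁ (cokernel.desc g (cokernel.π u) hg0)) :=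
      (tensorLeft (cokernel u)).map_epi _
    haveI : Epi (((cokernel.desc ι (cokernel.π u) hι0) ▷ cokernel g) ≫
        ((cokernel u) ◁ (cokernel.desc g (cokernel.π u) hg0))) := epi_comp _ _
    have hWW : 𝟙 (cokernel u ⊗ cokernel u) = 0 :=
      id_zero_of_epi (((cokernel.desc ι (cokernel.π u) hι0) ▷ cokernel g) ≫
        ((cokernel u) ◁ (cokernel.desc g (cokernel.π u) hg0))) hQC
    exact id_zero_of_quot (cokernel.π u) hWW
  haveI hepi_u : Epi u := by
    refine Preadditive.epi_of_cancel_zero _ (fun {Z} z hz => ?_)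
    rw [← cokernel.π_desc u z hz, hom_zero_of_target hWzero (cokernel.π u), zero_comp]
  haveI : IsIso u := isIso_of_mono_of_epi u
  -- the idempotent associated to the kernel summand
  set e : 𝟙_ A ⟶ 𝟙_ A := inv u ≫ biprod.fst ≫ ι with hedef
  have hfe : e ≫ f = 0 := by
    rw [hedef]
    simp only [hιdef, Category.assoc, kernel.condition, comp_zero]
  have he0 : e = 0 := by
    let fE : End (𝟙_ A) := f
    let eE : End (𝟙_ A) := e
    have hmul : fE * eE = 0 := hfe
    rcases mul_eq_zero.mp hmul with h' | h'
    · exact absurd h' hf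
    · exact h'
  -- kernel f = 0, so f is mono
  have hι0 : kernel.ι f = 0 := by
    have h1 : biprod.fst ≫ ι = u ≫ e := by
      rw [hedef, IsIso.hom_inv_id_assoc]
    rw [he0, comp_zero] at h1
    rw [← hιdef]
    exact (cancel_epi (biprod.fst : kernel f ⊞ Abelian.coimage f ⟶ kernel f)).mp
      (by rw [h1, comp_zero])
  haveI : Mono f := by
    refine Preadditive.mono_of_cancel_zero _ (fun {Z} z hz => ?_)
    rw [← kernel.lift_ι f z hz, hι0, comp_zero]
  -- the complementary idempotent is the identity, so f is epi
  have hsum : e + (inv u ≫ biprod.snd ≫ g) = 𝟙 (𝟙_ A) := by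
    have hct : e + (inv u ≫ biprod.snd ≫ g)
        = inv u ≫ (biprod.fst ≫ ι + biprod.snd ≫ g) := by
      rw [hedef, Preadditive.comp_add]
    rw [hct, htot, IsIso.inv_hom_id]
  have he' : (inv u ≫ biprod.snd) ≫ g = 𝟙 (𝟙_ A) := by
    rw [Category.assoc, ← hsum, he0, zero_add]
  haveI : Epi g := epi_of_epi_fac he'
  haveI : Epi f := by rw [← hfac]; exact epi_comp _ _
  exact isIso_of_mono_of_epi f

end EndUnitFieldAux

end Aux

/-- In a rigid abelian symmetric monoidal category, if `End(1)` is an integral domain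
then it is a field. -/
theorem end_unit_isField_of_isDomain
    {A : Type*} [Category A] [Abelian A]
    [MonoidalCategory A] [SymmetricCategory A] [MonoidalPreadditive A]
    [RigidCategory A] (h : IsDomain (End (𝟙_ A))) :
    IsField (End (𝟙_ A)) := by
  haveI := h.toNontrivial
  refine ⟨exists_pair_ne _, ?_, ?_⟩
  · intro a b
    show (b : 𝟙_ A ⟶ 𝟙_ A) ≫ a = a ≫ b
    exact EndUnitFieldAux.end_comm b a
  · intro a ha
    haveI := EndUnitFieldAux.isIso_of_ne_zero h a ha
    exact ⟨inv a, IsIso.inv_hom_id a⟩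
end

section
/- In a rigid abelian symmetric monoidal category A, the unit object 1 is Noetherian (as an object of A) if and only if the commutative ring End(1) is Noetherian. -/
/-!
A monomorphism `t : T ⟶ 𝟙_` splits. By the interchange law `cokernel t ◁ t = 0`, and this
whiskering is mono, so `cokernel t ⊗ T = 0`. Hence every map `X ⊗ T ⟶ cokernel t` vanishes
(`(X ⊗ T) ◁ t` is invertible), which by duality gives `cokernel t ⊗ Tᘁ = 0`; so `Tᘁ ◁ t` is
invertible, and transposing `ε` through its inverse yields a retraction of `t`.

Consequently `S ↦ {f | f factors through S}` embeds `Subobject 𝟙_` as an ordered set into the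
ideals of the commutative ring `End 𝟙_`. Splitting the kernel and image of `g` shows that
`g = g x g` for some `x`, so every finitely generated ideal is generated by an idempotent `e`
and is the image of `kernelSubobject (1 - e)`; the ascending chain conditions therefore agree.
-/

open CategoryTheory CategoryTheory.Limits CategoryTheory.MonoidalCategory

theorem Ideal.FG.exists_isIdempotentElem_eq_span {R : Type*} [CommRing R]
    (hR : ∀ g : R, ∃ x, g * x * g = g) {I : Ideal R} (hI : I.FG) :
    ∃ e, IsIdempotentElem e ∧ I = Ideal.span {e} := by
  refine (I.isIdempotentElem_iff_of_fg hI).1 (le_antisymm Ideal.mul_le_right fun g hg => ?_)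
  obtain ⟨x, hx⟩ := hR g
  rw [← hx, mul_assoc]
  exact Ideal.mul_mem_mul hg (I.mul_mem_left x hg)

theorem CategoryTheory.isSplitEpi_of_isSplitMono_kernel_ι {C : Type*} [Category C] [Abelian C]
    {X Y : C} (p : X ⟶ Y) [Epi p] [IsSplitMono (kernel.ι p)] : IsSplitEpi p :=
  let S := ShortComplex.mk (kernel.ι p) p (kernel.condition p)
  (ShortComplex.Splitting.ofExactOfRetraction S (S.exact_of_f_is_kernel (kernelIsKernel p))
    (retraction (kernel.ι p)) (IsSplitMono.id _) inferInstance).isSplitEpi_g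

namespace CategoryTheory.MonoidalCategory

section Unit

variable {C : Type*} [Category C] [MonoidalCategory C]

theorem unit_end_comp_comm (f g : 𝟙_ C ⟶ 𝟙_ C) : f ≫ g = g ≫ f := by
  have h := whisker_exchange f g
  rw [id_whiskerLeft, whiskerRight_id, unitors_equal, unitors_inv_equal] at h
  simpa using h.symm

theorem isSplitMono_of_isIso_whiskerLeft {T T' : C} [ExactPairing T T'] (t : T ⟶ 𝟙_ C)
    [IsIso (T' ◁ t)] : IsSplitMono t := by
  let r := tensorLeftHomEquiv (𝟙_ C) T T' (𝟙_ C) (inv (T' ◁ t) ≫ ε_ T T')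
  have : t ≫ r = (ρ_ T).inv := by
    apply (tensorLeftHomEquiv T T T' (𝟙_ C)).symm.injective
    rw [tensorLeftHomEquiv_symm_naturality, Equiv.symm_apply_apply, IsIso.hom_inv_id_assoc]
    simp [tensorLeftHomEquiv, unitors_equal]
  exact ⟨⟨r ≫ (ρ_ T).hom, by simp [reassoc_of% this]⟩⟩

theorem unit_end_mul_comm (f g : End (𝟙_ C)) : f * g = g * f :=
  unit_end_comp_comm g f

variable [Preadditive C]

variable (C) in
/-- Not an instance: it would form a diamond with the ring structure `End.ring`. -/
abbrev unitEndCommRing : CommRing (End (𝟙_ C)) where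
  mul_comm := unit_end_mul_comm

def factorsIdeal (S : Subobject (𝟙_ C)) : Ideal (End (𝟙_ C)) where
  carrier := {f | S.Factors f}
  add_mem' := S.factors_add _ _
  zero_mem' := S.factors_zero
  smul_mem' r f hf := by
    rw [smul_eq_mul, unit_end_mul_comm]
    exact S.factors_of_factors_right r hf

theorem mem_factorsIdeal {S : Subobject (𝟙_ C)} {f : End (𝟙_ C)} :
    f ∈ factorsIdeal S ↔ S.Factors f :=
  Iff.rfl

theorem factorsIdeal_mono : Monotone (factorsIdeal (C := C)) :=
  fun _ _ h f => Subobject.factors_of_le f h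

theorem factorsIdeal_kernelSubobject [HasKernels C] {e : End (𝟙_ C)} (he : IsIdempotentElem e) :
    factorsIdeal (kernelSubobject (1 - e : End (𝟙_ C))) = Ideal.span {e} := by
  ext f
  rw [mem_factorsIdeal, kernelSubobject_factors_iff, Ideal.mem_span_singleton']
  change (1 - e) * f = 0 ↔ _
  rw [sub_mul, one_mul, sub_eq_zero]
  constructor
  · intro h
    exact ⟨f, by rw [unit_end_mul_comm, ← h]⟩
  · rintro ⟨a, rfl⟩
    rw [← mul_assoc, unit_end_mul_comm e a, mul_assoc, he.eq]

end Unit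

section Rigid

variable {C : Type*} [Category C] [MonoidalCategory C] [RigidCategory C] (X : C)

instance : (tensorLeft X).IsLeftAdjoint := ⟨_, ⟨tensorLeftAdjunction (ᘁX) X⟩⟩
instance : (tensorLeft X).IsRightAdjoint := ⟨_, ⟨tensorLeftAdjunction X (Xᘁ)⟩⟩
instance : (tensorRight X).IsLeftAdjoint := ⟨_, ⟨tensorRightAdjunction X (Xᘁ)⟩⟩
instance : (tensorRight X).IsRightAdjoint := ⟨_, ⟨tensorRightAdjunction (ᘁX) X⟩⟩

end Rigid

section Abelian

variable {C : Type*} [Category C] [Abelian C] [MonoidalCategory C] [MonoidalPreadditive C]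
  [RigidCategory C]

instance {X Y Z : C} (f : Y ⟶ Z) [Mono f] : Mono (X ◁ f) := by
  simpa using (tensorLeft X).map_mono f

instance {X Y Z : C} (f : Y ⟶ Z) [Epi f] : Epi (f ▷ X) := by
  simpa using (tensorRight X).map_epi f

theorem isIso_whiskerLeft_of_isZero_tensor_cokernel {X Y Z : C} (f : Y ⟶ Z) [Mono f]
    (h : IsZero (X ⊗ cokernel f)) : IsIso (X ◁ f) := by
  have : Epi ((tensorLeft X).map f) := Preadditive.epi_of_isZero_cokernel _
    (h.of_iso (PreservesCokernel.iso (tensorLeft X) f).symm)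
  have : Epi (X ◁ f) := this
  exact isIso_of_mono_of_epi _

section MonoToUnit

variable {T : C} (t : T ⟶ 𝟙_ C)

theorem cokernel_whiskerLeft_eq_zero : cokernel t ◁ t = 0 := by
  refine zero_of_epi_comp (cokernel.π t ▷ T) ?_
  rw [← whisker_exchange, id_whiskerLeft, whiskerRight_id, unitors_inv_equal]
  simp

variable [Mono t]

theorem isZero_cokernel_tensor : IsZero (cokernel t ⊗ T) :=
  IsZero.of_mono_eq_zero _ (cokernel_whiskerLeft_eq_zero t)

variable [BraidedCategory C]

theorem eq_zero_of_tensor_to_cokernel {X : C} (g : X ⊗ T ⟶ cokernel t) : g = 0 := by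
  have : IsIso ((X ⊗ T) ◁ t) := isIso_whiskerLeft_of_isZero_tensor_cokernel t <|
    ((tensorLeft X).map_isZero ((isZero_cokernel_tensor t).of_iso (β_ T _))).of_iso (α_ X T _)
  have h : (X ⊗ T) ◁ t ≫ g ▷ 𝟙_ C = (X ⊗ T) ◁ t ≫ 0 := by
    rw [whisker_exchange, cokernel_whiskerLeft_eq_zero, comp_zero, comp_zero]
  simpa using (cancel_epi _).1 h

theorem isZero_cokernel_tensor_rightDual : IsZero (cokernel t ⊗ Tᘁ) := by
  rw [IsZero.iff_id_eq_zero, ← (tensorRightHomEquiv _ T Tᘁ _).apply_symm_apply (𝟙 _),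
    eq_zero_of_tensor_to_cokernel t ((tensorRightHomEquiv _ T Tᘁ _).symm _)]
  simp [tensorRightHomEquiv]

theorem isSplitMono_of_mono_to_unit : IsSplitMono t := by
  have : IsIso (Tᘁ ◁ t) := isIso_whiskerLeft_of_isZero_tensor_cokernel t
    ((isZero_cokernel_tensor_rightDual t).of_iso (β_ (Tᘁ) (cokernel t)))
  exact isSplitMono_of_isIso_whiskerLeft (T' := Tᘁ) t

end MonoToUnit

variable [BraidedCategory C]

theorem factorsIdeal_le_factorsIdeal_iff {S T : Subobject (𝟙_ C)} :
    factorsIdeal S ≤ factorsIdeal T ↔ S ≤ T := by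
  refine ⟨fun h => ?_, fun h => factorsIdeal_mono h⟩
  have := isSplitMono_of_mono_to_unit S.arrow
  have hT : T.Factors (retraction S.arrow ≫ S.arrow) := h (Subobject.factors_comp_arrow _)
  refine Subobject.le_of_comm (S.arrow ≫ T.factorThru _ hT) ?_
  rw [Category.assoc, Subobject.factorThru_arrow, ← Category.assoc, IsSplitMono.id,
    Category.id_comp]

def factorsIdealEmbedding : Subobject (𝟙_ C) ↪o Ideal (End (𝟙_ C)) :=
  OrderEmbedding.ofMapLEIff factorsIdeal fun _ _ => factorsIdeal_le_factorsIdeal_iff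

theorem unit_end_exists_mul_mul_eq (g : End (𝟙_ C)) : ∃ x, g * x * g = g := by
  have := isSplitMono_of_mono_to_unit (image.ι g)
  have := isSplitMono_of_mono_to_unit (kernel.ι (factorThruImage g))
  have := isSplitEpi_of_isSplitMono_kernel_ι (factorThruImage g)
  refine ⟨retraction (image.ι g) ≫ section_ (factorThruImage g), ?_⟩
  calc g ≫ (retraction (image.ι g) ≫ section_ (factorThruImage g)) ≫ g
      = factorThruImage g ≫ (image.ι g ≫ retraction (image.ι g)) ≫
          (section_ (factorThruImage g) ≫ factorThruImage g) ≫ image.ι g := by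
        simp only [Category.assoc, image.fac, image.fac_assoc]
    _ = g := by simp

theorem isNoetherianObject_unit_of_isNoetherianRing [IsNoetherianRing (End (𝟙_ C))] :
    IsNoetherianObject (𝟙_ C) :=
  ⟨(factorsIdealEmbedding (C := C)).wellFoundedGT⟩

theorem isNoetherianRing_of_isNoetherianObject_unit [IsNoetherianObject (𝟙_ C)] :
    IsNoetherianRing (End (𝟙_ C)) := by
  let := unitEndCommRing C
  have hrange (N : {N : Ideal (End (𝟙_ C)) // N.FG}) : ∃ S, factorsIdeal S = N.1 := by
    obtain ⟨e, he, hN⟩ := N.2.exists_isIdempotentElem_eq_span unit_end_exists_mul_mul_eq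
    exact ⟨_, (factorsIdeal_kernelSubobject he).trans hN.symm⟩
  choose θ hθ using hrange
  have hθ_strictMono : StrictMono θ := fun N N' h =>
    (factorsIdealEmbedding (C := C)).lt_iff_lt.1 (by simpa [factorsIdealEmbedding, hθ] using h)
  rw [isNoetherianRing_iff, isNoetherian_iff_fg_wellFounded]
  exact hθ_strictMono.wellFoundedGT

end Abelian

end CategoryTheory.MonoidalCategory

/-- In a rigid abelian symmetric monoidal category, the unit object is a Noetherian
object if and only if the ring `End(1)` is Noetherian. -/
theorem unit_noetherianObject_iff_end_noetherian
    {A : Type*} [Category A] [Abelian A]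
    [MonoidalCategory A] [SymmetricCategory A] [MonoidalPreadditive A]
    [RigidCategory A] :
    IsNoetherianObject (𝟙_ A) ↔ IsNoetherianRing (End (𝟙_ A)) :=
  ⟨fun _ => isNoetherianRing_of_isNoetherianObject_unit,
    fun _ => isNoetherianObject_unit_of_isNoetherianRing⟩
end

section
/- Let A be an abelian symmetric monoidal category whose tensor product is exact in each variable. Then the full subcategory of dualisable objects of A is closed under kernels and cokernels; in particular it is abelian and its inclusion into A is exact. -/
open CategoryTheory CategoryTheory.Limits CategoryTheory.MonoidalCategory

set_option linter.unusedSectionVars false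

noncomputable section

namespace DualClosure

variable {A : Type*} [Category A] [Abelian A]
    [MonoidalCategory A] [MonoidalPreadditive A]
    [∀ X : A, PreservesFiniteLimits (tensorLeft X)]
    [∀ X : A, PreservesFiniteColimits (tensorLeft X)]
    [∀ X : A, PreservesFiniteLimits (tensorRight X)]
    [∀ X : A, PreservesFiniteColimits (tensorRight X)]
    {X Y : A} [HasRightDual X] [HasRightDual Y] (f : X ⟶ Y)

lemma ker_coev_zero :
    (η_ X Xᘁ ≫ X ◁ cokernel.π (fᘁ)) ≫ (f ▷ cokernel (fᘁ)) = 0 := by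
  rw [Category.assoc, whisker_exchange, ← coevaluation_comp_rightAdjointMate_assoc,
    ← MonoidalCategory.whiskerLeft_comp, cokernel.condition,
    MonoidalPreadditive.whiskerLeft_zero, comp_zero]

lemma ker_ev_zero :
    (fᘁ ▷ kernel f) ≫ (Xᘁ ◁ kernel.ι f) ≫ ε_ X Xᘁ = 0 := by
  rw [← whisker_exchange_assoc, rightAdjointMate_comp_evaluation,
    ← MonoidalCategory.whiskerLeft_comp_assoc, kernel.condition,
    MonoidalPreadditive.whiskerLeft_zero, zero_comp]

/-- coevaluation for the pairing (kernel f, cokernel fᘁ) -/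
def kerCoev : 𝟙_ A ⟶ kernel f ⊗ cokernel (fᘁ) :=
  kernel.lift ((tensorRight (cokernel (fᘁ))).map f)
      (η_ X Xᘁ ≫ X ◁ cokernel.π (fᘁ)) (by simpa using ker_coev_zero f) ≫
    (PreservesKernel.iso (tensorRight (cokernel (fᘁ))) f).inv

/-- evaluation for the pairing (kernel f, cokernel fᘁ) -/
def kerEv : cokernel (fᘁ) ⊗ kernel f ⟶ 𝟙_ A :=
  (PreservesCokernel.iso (tensorRight (kernel f)) (fᘁ)).hom ≫
    cokernel.desc ((tensorRight (kernel f)).map (fᘁ))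
      ((Xᘁ ◁ kernel.ι f) ≫ ε_ X Xᘁ) (by simpa using ker_ev_zero f)

lemma kerCoev_ι :
    kerCoev f ≫ (kernel.ι f ▷ cokernel (fᘁ)) = η_ X Xᘁ ≫ X ◁ cokernel.π (fᘁ) := by
  have h : (kernel.ι f ▷ cokernel (fᘁ)) =
      (tensorRight (cokernel (fᘁ))).map (kernel.ι f) := rfl
  rw [kerCoev, Category.assoc, h, ← kernelComparison_comp_ι,
    ← PreservesKernel.iso_hom, Iso.inv_hom_id_assoc, kernel.lift_ι]

lemma π_kerEv :
    (cokernel.π (fᘁ) ▷ kernel f) ≫ kerEv f = (Xᘁ ◁ kernel.ι f) ≫ ε_ X Xᘁ := by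
  have h : (cokernel.π (fᘁ) ▷ kernel f) =
      (tensorRight (kernel f)).map (cokernel.π (fᘁ)) := rfl
  rw [kerEv, h, ← π_comp_cokernelComparison, ← PreservesCokernel.iso_inv,
    Category.assoc, Iso.inv_hom_id_assoc, cokernel.π_desc]

lemma ker_ev_coev :
    kerCoev f ▷ kernel f ≫ (α_ (kernel f) (cokernel (fᘁ)) (kernel f)).hom ≫
      kernel f ◁ kerEv f = (λ_ (kernel f)).hom ≫ (ρ_ (kernel f)).inv := by
  rw [← cancel_mono ((ρ_ (kernel f)).hom ≫ kernel.ι f)]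
  simp only [Category.assoc, Iso.inv_hom_id_assoc]
  rw [← rightUnitor_naturality, ← Category.assoc (kernel f ◁ kerEv f),
    whisker_exchange]
  simp only [Category.assoc]
  rw [← associator_naturality_left_assoc, ← comp_whiskerRight_assoc, kerCoev_ι,
    comp_whiskerRight, Category.assoc, associator_naturality_middle_assoc,
    ← MonoidalCategory.whiskerLeft_comp_assoc, π_kerEv,
    MonoidalCategory.whiskerLeft_comp, Category.assoc,
    ← associator_naturality_right_assoc, ← whisker_exchange_assoc,
    reassoc_of% (ExactPairing.evaluation_coevaluation X (Xᘁ))]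
  simp

lemma ker_coev_ev :
    cokernel (fᘁ) ◁ kerCoev f ≫ (α_ (cokernel (fᘁ)) (kernel f) (cokernel (fᘁ))).inv ≫
      kerEv f ▷ cokernel (fᘁ)
    = (ρ_ (cokernel (fᘁ))).hom ≫ (λ_ (cokernel (fᘁ))).inv := by
  have : Epi (cokernel.π (fᘁ : Yᘁ ⟶ Xᘁ) ▷ (𝟙_ A)) := by
    rw [MonoidalCategory.whiskerRight_id]; infer_instance
  rw [← cancel_epi (cokernel.π (fᘁ : Yᘁ ⟶ Xᘁ) ▷ (𝟙_ A))]
  rw [← whisker_exchange_assoc, associator_inv_naturality_left_assoc,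
    ← comp_whiskerRight, π_kerEv, comp_whiskerRight,
    ← associator_inv_naturality_middle_assoc,
    ← MonoidalCategory.whiskerLeft_comp_assoc, kerCoev_ι,
    MonoidalCategory.whiskerLeft_comp, Category.assoc,
    associator_inv_naturality_right_assoc, whisker_exchange,
    reassoc_of% (ExactPairing.coevaluation_evaluation X (Xᘁ))]
  simp

def kerPairing : ExactPairing (kernel f) (cokernel (fᘁ)) where
  coevaluation' := kerCoev f
  evaluation' := kerEv f
  coevaluation_evaluation' := ker_coev_ev f
  evaluation_coevaluation' := ker_ev_coev f

lemma coker_coev_zero :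
    (η_ Y Yᘁ ≫ cokernel.π f ▷ Yᘁ) ≫ (cokernel f ◁ (fᘁ)) = 0 := by
  rw [Category.assoc, ← whisker_exchange, coevaluation_comp_rightAdjointMate_assoc,
    ← comp_whiskerRight, cokernel.condition,
    MonoidalPreadditive.zero_whiskerRight, comp_zero]

lemma coker_ev_zero :
    (kernel (fᘁ) ◁ f) ≫ (kernel.ι (fᘁ : Yᘁ ⟶ Xᘁ) ▷ Y) ≫ ε_ Y Yᘁ = 0 := by
  rw [whisker_exchange_assoc, ← rightAdjointMate_comp_evaluation,
    ← comp_whiskerRight_assoc, kernel.condition,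
    MonoidalPreadditive.zero_whiskerRight, zero_comp]

/-- coevaluation for the pairing (cokernel f, kernel fᘁ) -/
def cokerCoev : 𝟙_ A ⟶ cokernel f ⊗ kernel (fᘁ) :=
  kernel.lift ((tensorLeft (cokernel f)).map (fᘁ))
      (η_ Y Yᘁ ≫ cokernel.π f ▷ Yᘁ) (by simpa using coker_coev_zero f) ≫
    (PreservesKernel.iso (tensorLeft (cokernel f)) (fᘁ)).inv

/-- evaluation for the pairing (cokernel f, kernel fᘁ) -/
def cokerEv : kernel (fᘁ) ⊗ cokernel f ⟶ 𝟙_ A :=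
  (PreservesCokernel.iso (tensorLeft (kernel (fᘁ))) f).hom ≫
    cokernel.desc ((tensorLeft (kernel (fᘁ))).map f)
      ((kernel.ι (fᘁ : Yᘁ ⟶ Xᘁ) ▷ Y) ≫ ε_ Y Yᘁ) (by simpa using coker_ev_zero f)

lemma cokerCoev_ι :
    cokerCoev f ≫ (cokernel f ◁ kernel.ι (fᘁ : Yᘁ ⟶ Xᘁ)) =
      η_ Y Yᘁ ≫ cokernel.π f ▷ Yᘁ := by
  have h : (cokernel f ◁ kernel.ι (fᘁ : Yᘁ ⟶ Xᘁ)) =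
      (tensorLeft (cokernel f)).map (kernel.ι (fᘁ)) := rfl
  rw [cokerCoev, Category.assoc, h, ← kernelComparison_comp_ι,
    ← PreservesKernel.iso_hom, Iso.inv_hom_id_assoc, kernel.lift_ι]

lemma π_cokerEv :
    (kernel (fᘁ) ◁ cokernel.π f) ≫ cokerEv f =
      (kernel.ι (fᘁ : Yᘁ ⟶ Xᘁ) ▷ Y) ≫ ε_ Y Yᘁ := by
  have h : (kernel (fᘁ) ◁ cokernel.π f) =
      (tensorLeft (kernel (fᘁ))).map (cokernel.π f) := rfl
  rw [cokerEv, h, ← π_comp_cokernelComparison, ← PreservesCokernel.iso_inv,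
    Category.assoc, Iso.inv_hom_id_assoc, cokernel.π_desc]

lemma coker_coev_ev :
    kernel (fᘁ) ◁ cokerCoev f ≫ (α_ (kernel (fᘁ)) (cokernel f) (kernel (fᘁ))).inv ≫
      cokerEv f ▷ kernel (fᘁ)
    = (ρ_ (kernel (fᘁ))).hom ≫ (λ_ (kernel (fᘁ))).inv := by
  have : Mono ((𝟙_ A) ◁ kernel.ι (fᘁ : Yᘁ ⟶ Xᘁ)) := by
    rw [MonoidalCategory.id_whiskerLeft]; infer_instance
  rw [← cancel_mono ((𝟙_ A) ◁ kernel.ι (fᘁ : Yᘁ ⟶ Xᘁ))]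
  simp only [Category.assoc]
  rw [← whisker_exchange, ← associator_inv_naturality_right_assoc,
    ← MonoidalCategory.whiskerLeft_comp_assoc, cokerCoev_ι,
    MonoidalCategory.whiskerLeft_comp, Category.assoc,
    associator_inv_naturality_middle_assoc,
    ← comp_whiskerRight, π_cokerEv, comp_whiskerRight,
    ← associator_inv_naturality_left_assoc, whisker_exchange_assoc,
    ExactPairing.coevaluation_evaluation Y (Yᘁ)]
  simp

lemma coker_ev_coev :
    cokerCoev f ▷ cokernel f ≫ (α_ (cokernel f) (kernel (fᘁ)) (cokernel f)).hom ≫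
      cokernel f ◁ cokerEv f = (λ_ (cokernel f)).hom ≫ (ρ_ (cokernel f)).inv := by
  have : Epi ((𝟙_ A) ◁ cokernel.π f) := by
    rw [MonoidalCategory.id_whiskerLeft]; infer_instance
  rw [← cancel_epi ((𝟙_ A) ◁ cokernel.π f)]
  rw [whisker_exchange_assoc, associator_naturality_right_assoc,
    ← MonoidalCategory.whiskerLeft_comp, π_cokerEv,
    MonoidalCategory.whiskerLeft_comp,
    ← associator_naturality_middle_assoc,
    ← comp_whiskerRight_assoc, cokerCoev_ι,
    comp_whiskerRight, Category.assoc,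
    associator_naturality_left_assoc, ← whisker_exchange,
    reassoc_of% (ExactPairing.evaluation_coevaluation Y (Yᘁ))]
  simp

def cokerPairing : ExactPairing (cokernel f) (kernel (fᘁ)) where
  coevaluation' := cokerCoev f
  evaluation' := cokerEv f
  coevaluation_evaluation' := coker_coev_ev f
  evaluation_coevaluation' := coker_ev_coev f

end DualClosure

end

/-- Let `A` be an abelian symmetric monoidal category whose tensor product is exact in
each variable. Then the dualisable objects of `A` are closed under kernels and
cokernels (in particular they form an abelian subcategory with exact inclusion). -/
theorem dualizable_closed_under_kernels_cokernels
    {A : Type*} [Category A] [Abelian A]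
    [MonoidalCategory A] [SymmetricCategory A] [MonoidalPreadditive A]
    [∀ X : A, PreservesFiniteLimits (tensorLeft X)]
    [∀ X : A, PreservesFiniteColimits (tensorLeft X)]
    [∀ X : A, PreservesFiniteLimits (tensorRight X)]
    [∀ X : A, PreservesFiniteColimits (tensorRight X)]
    {X Y : A} [HasRightDual X] [HasRightDual Y] (f : X ⟶ Y) :
    Nonempty (HasRightDual (kernel f)) ∧ Nonempty (HasRightDual (cokernel f)) := by
  constructor
  · exact ⟨{ rightDual := cokernel (fᘁ), exact := DualClosure.kerPairing f }⟩
  · exact ⟨{ rightDual := kernel (fᘁ), exact := DualClosure.cokerPairing f }⟩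
end

section
/- Let A be a rigid abelian symmetric monoidal category. If the unit object 1 is projective, then every object of A is projective, i.e. A is split. -/
open CategoryTheory CategoryTheory.Limits CategoryTheory.MonoidalCategory

/-- In a rigid abelian symmetric monoidal category, if the unit object is projective
then every object is projective, i.e. the category is split. -/
theorem rigid_abelian_split_of_unit_projective
    {A : Type*} [Category A] [Abelian A]
    [MonoidalCategory A] [SymmetricCategory A] [MonoidalPreadditive A]
    [RigidCategory A] (h : Projective (𝟙_ A)) :
    ∀ X : A, Projective X := by
  intro X
  have adj := tensorRightAdjunction X (Xᘁ)
  haveI : (tensorRight (Xᘁ)).IsLeftAdjoint :=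
    ⟨tensorRight ((Xᘁ)ᘁ), ⟨tensorRightAdjunction (Xᘁ) ((Xᘁ)ᘁ)⟩⟩
  have hP : Projective ((tensorRight X).obj (𝟙_ A)) := adj.map_projective _ h
  exact Projective.of_iso (λ_ X) (by simpa using hP)
end

section
/- Let A be a rigid abelian symmetric monoidal category in which every object is both projective and injective (A is split). Then the ⊗-ideal N of morphisms universally of trace zero vanishes: if f : A → B satisfies tr(g ∘ f) = 0 for all g : B → A, then f = 0. -/
open CategoryTheory CategoryTheory.Limits CategoryTheory.MonoidalCategory

/-- The categorical trace of an endomorphism of a dualisable object in a braided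
monoidal category, valued in `End (𝟙_ C)`. -/
noncomputable def catTrace {C : Type*} [Category C] [MonoidalCategory C]
    [BraidedCategory C] {X : C} [HasRightDual X] (f : X ⟶ X) : End (𝟙_ C) :=
  η_ X (Xᘁ) ≫ f ▷ (Xᘁ) ≫ (β_ X (Xᘁ)).hom ≫ ε_ X (Xᘁ)

/-- In an abelian category where every object is projective and injective,
if `u ≫ v = 0` for all `v : Z ⟶ W`, then `u = 0`. -/
theorem comp_all_zero_imp_zero {A : Type*} [Category A] [Abelian A]
    (hproj : ∀ X : A, Projective X) (hinj : ∀ X : A, Injective X)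
    {W Z : A} (u : W ⟶ Z) (h : ∀ v : Z ⟶ W, u ≫ v = 0) : u = 0 := by
  haveI := hproj (Abelian.image u)
  haveI := hinj (Abelian.image u)
  have hse : Projective.factorThru (𝟙 (Abelian.image u)) (Abelian.factorThruImage u) ≫
      Abelian.factorThruImage u = 𝟙 _ := Projective.factorThru_comp _ _
  have hmp : Abelian.image.ι u ≫ Injective.factorThru (𝟙 (Abelian.image u)) (Abelian.image.ι u)
      = 𝟙 _ := Injective.comp_factorThru _ _
  have hes : Abelian.factorThruImage u ≫
      Projective.factorThru (𝟙 (Abelian.image u)) (Abelian.factorThruImage u) = 0 := by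
    calc Abelian.factorThruImage u ≫
          Projective.factorThru (𝟙 (Abelian.image u)) (Abelian.factorThruImage u)
        = Abelian.factorThruImage u ≫ (Abelian.image.ι u ≫
            Injective.factorThru (𝟙 (Abelian.image u)) (Abelian.image.ι u)) ≫
            Projective.factorThru (𝟙 (Abelian.image u)) (Abelian.factorThruImage u) := by
          rw [hmp, Category.id_comp]
      _ = u ≫ (Injective.factorThru (𝟙 (Abelian.image u)) (Abelian.image.ι u) ≫
            Projective.factorThru (𝟙 (Abelian.image u)) (Abelian.factorThruImage u)) := by
          simp only [← Category.assoc]; rw [Abelian.image.fac]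
      _ = 0 := h _
  have he0 : Abelian.factorThruImage u = 0 := by
    have h1 : (Abelian.factorThruImage u ≫
        Projective.factorThru (𝟙 (Abelian.image u)) (Abelian.factorThruImage u)) ≫
        Abelian.factorThruImage u = Abelian.factorThruImage u := by
      rw [Category.assoc, hse, Category.comp_id]
    rw [hes, Limits.zero_comp] at h1
    exact h1.symm
  rw [← Abelian.image.fac u, he0, Limits.zero_comp]

/-- In a split rigid abelian symmetric monoidal category (every object projective and
injective), the ⊗-ideal of morphisms universally of trace zero vanishes: if
`tr (f ≫ g) = 0` for all `g : Y ⟶ X`, then `f = 0`. -/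
theorem trace_ideal_vanishes_of_split
    {A : Type*} [Category A] [Abelian A]
    [MonoidalCategory A] [SymmetricCategory A] [MonoidalPreadditive A]
    [RigidCategory A]
    (hproj : ∀ X : A, Projective X) (hinj : ∀ X : A, Injective X)
    {X Y : A} (f : X ⟶ Y) (hf : ∀ g : Y ⟶ X, catTrace (f ≫ g) = 0) :
    f = 0 := by
  -- the swapped exact pairing `(Xᘁ, X)` coming from the braiding
  letI ep : ExactPairing (Xᘁ) X := BraidedCategory.exactPairing_swap X (Xᘁ)
  have hε : (ε_ (Xᘁ) X : X ⊗ Xᘁ ⟶ 𝟙_ A) = (β_ X (Xᘁ)).hom ≫ ε_ X (Xᘁ) := rfl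
  set u : 𝟙_ A ⟶ Y ⊗ Xᘁ := η_ X (Xᘁ) ≫ f ▷ (Xᘁ) with hu
  have aux : (α_ (𝟙_ A) X (Xᘁ)).hom ≫ (𝟙_ A) ◁ ε_ (Xᘁ) X ≫ (ρ_ (𝟙_ A)).hom
      = (λ_ X).hom ▷ (Xᘁ) ≫ ε_ (Xᘁ) X := by
    rw [← MonoidalCategory.unitors_equal, MonoidalCategory.leftUnitor_naturality]
    have : (α_ (𝟙_ A) X (Xᘁ)).hom ≫ (λ_ (X ⊗ Xᘁ)).hom = (λ_ X).hom ▷ (Xᘁ) := by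
      monoidal
    rw [← Category.assoc, this]
  -- every functional kills `u`
  have hkill : ∀ v : Y ⊗ Xᘁ ⟶ 𝟙_ A, u ≫ v = 0 := by
    intro v
    set g : Y ⟶ X := (tensorRightHomEquiv Y (Xᘁ) X (𝟙_ A)) v ≫ (λ_ X).hom with hg
    have hv : g ▷ (Xᘁ) ≫ ε_ (Xᘁ) X = v := by
      rw [hg]
      have h1 := (tensorRightHomEquiv Y (Xᘁ) X (𝟙_ A)).left_inv v
      dsimp [tensorRightHomEquiv] at h1 ⊢
      rw [comp_whiskerRight, Category.assoc, ← aux]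
      exact h1
    calc u ≫ v = η_ X (Xᘁ) ≫ (f ≫ g) ▷ (Xᘁ) ≫ ε_ (Xᘁ) X := by
          rw [hu, ← hv]
          try simp [comp_whiskerRight]
      _ = catTrace (f ≫ g) := by rw [hε, catTrace]; try simp only [Category.assoc]
      _ = 0 := hf g
  have hu0 : u = 0 := comp_all_zero_imp_zero hproj hinj u hkill
  -- recover `f` from `u`
  have key : (tensorRightHomEquiv (𝟙_ A) X (Xᘁ) Y) ((λ_ X).hom ≫ f) = u := by
    dsimp [tensorRightHomEquiv]
    rw [hu, comp_whiskerRight]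
    have h2 : (α_ (𝟙_ A) X (Xᘁ)).inv ≫ (λ_ X).hom ▷ (Xᘁ) = (λ_ (X ⊗ Xᘁ)).hom := by
      monoidal
    have coh : (ρ_ (𝟙_ A)).inv ≫ (𝟙_ A) ◁ η_ X (Xᘁ) ≫ (α_ (𝟙_ A) X (Xᘁ)).inv ≫
        (λ_ X).hom ▷ (Xᘁ) = η_ X (Xᘁ) := by
      rw [h2, MonoidalCategory.leftUnitor_naturality, MonoidalCategory.unitors_equal,
        Iso.inv_hom_id_assoc]
    try simp only [Category.assoc]
    rw [reassoc_of% coh]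
  rw [hu0] at key
  have hlf : (λ_ X).hom ≫ f = 0 := by
    apply (tensorRightHomEquiv (𝟙_ A) X (Xᘁ) Y).injective
    rw [key]
    dsimp [tensorRightHomEquiv]
    simp
  rwa [← cancel_epi (λ_ X).hom, Limits.comp_zero]
end

section
/- Let F : C → D be a full ⊗-functor between rigid additive symmetric monoidal categories such that the induced ring homomorphism End_C(1) → End_D(1) is injective. Then a morphism f of C lies in the ideal N_C of morphisms universally of trace zero if and only if F(f) lies in N_D; consequently the induced full functor C/N_C → D/N_D is faithful. -/
open CategoryTheory CategoryTheory.Limits CategoryTheory.MonoidalCategory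

noncomputable section TraceAux

open CategoryTheory.Functor.LaxMonoidal CategoryTheory.Functor.OplaxMonoidal
  CategoryTheory.Functor.Monoidal

variable {C : Type*} [Category C] [MonoidalCategory C]
variable {D : Type*} [Category D] [MonoidalCategory D]

/-- The trace with respect to an explicitly given exact pairing. -/
def auxTr [BraidedCategory C] {X Y : C} (p : ExactPairing X Y) (f : X ⟶ X) : End (𝟙_ C) :=
  p.coevaluation' ≫ f ▷ Y ≫ (β_ X Y).hom ≫ p.evaluation'

lemma catTrace_eq_auxTr [BraidedCategory C] {X : C} [inst : HasRightDual X] (f : X ⟶ X) :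
    catTrace f = auxTr inst.exact f := rfl

/-- The trace does not depend on the choice of right dual. -/
lemma auxTr_eq_of_pairings [BraidedCategory C] {X Y₁ Y₂ : C} (p₁ : ExactPairing X Y₁)
    (p₂ : ExactPairing X Y₂) (f : X ⟶ X) : auxTr p₁ f = auxTr p₂ f := by
  letI d₁ : HasRightDual X := @HasRightDual.mk C _ _ X Y₁ p₁
  letI d₂ : HasRightDual X := @HasRightDual.mk C _ _ X Y₂ p₂
  let φ : Y₂ ⟶ Y₁ := @rightAdjointMate C _ _ X X d₁ d₂ (𝟙 X)
  have h1 : p₂.coevaluation' ≫ X ◁ φ = p₁.coevaluation' := by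
    have := @coevaluation_comp_rightAdjointMate C _ _ X X d₁ d₂ (𝟙 X)
    simpa [ExactPairing.coevaluation] using this
  have h2 : φ ▷ X ≫ p₁.evaluation' = p₂.evaluation' := by
    have := @rightAdjointMate_comp_evaluation C _ _ X X d₁ d₂ (𝟙 X)
    simpa [ExactPairing.evaluation] using this
  simp only [auxTr]
  rw [← h1, ← h2]
  simp only [Category.assoc]
  slice_lhs 2 3 => rw [whisker_exchange]
  slice_lhs 3 4 => rw [BraidedCategory.braiding_naturality_right]
  simp [Category.assoc]

variable (F : C ⥤ D) [F.Monoidal]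

/-- A strong monoidal functor sends exact pairings to exact pairings. -/
def mapPairing (X Y : C) [ExactPairing X Y] : ExactPairing (F.obj X) (F.obj Y) where
  coevaluation' := ε F ≫ F.map (η_ X Y) ≫ δ F X Y
  evaluation' := μ F Y X ≫ F.map (ε_ X Y) ≫ η F
  coevaluation_evaluation' := by
    have h : F.obj Y ◁ δ F X Y ≫ (α_ (F.obj Y) (F.obj X) (F.obj Y)).inv ≫ μ F Y X ▷ F.obj Y
        = μ F Y (X ⊗ Y) ≫ F.map (α_ Y X Y).inv ≫ δ F (Y ⊗ X) Y := by
      rw [← cancel_mono (μ F (Y ⊗ X) Y)]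
      simp [← Functor.LaxMonoidal.associativity_inv]
    have hC : F.map (Y ◁ η_ X Y) ≫ F.map (α_ Y X Y).inv ≫ F.map (ε_ X Y ▷ Y)
        = F.map (ρ_ Y).hom ≫ F.map (λ_ Y).inv := by
      simp only [← Functor.map_comp]
      rw [ExactPairing.coevaluation_evaluation]
    calc F.obj Y ◁ (ε F ≫ F.map (η_ X Y) ≫ δ F X Y) ≫ (α_ _ _ _).inv ≫
          (μ F Y X ≫ F.map (ε_ X Y) ≫ η F) ▷ F.obj Y
        = F.obj Y ◁ ε F ≫ F.obj Y ◁ F.map (η_ X Y) ≫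
            (F.obj Y ◁ δ F X Y ≫ (α_ _ _ _).inv ≫ μ F Y X ▷ F.obj Y) ≫
            F.map (ε_ X Y) ▷ F.obj Y ≫ η F ▷ F.obj Y := by
          simp
      _ = F.obj Y ◁ ε F ≫ (F.obj Y ◁ F.map (η_ X Y) ≫ μ F Y (X ⊗ Y)) ≫
            F.map (α_ Y X Y).inv ≫ (δ F (Y ⊗ X) Y ≫ F.map (ε_ X Y) ▷ F.obj Y) ≫
            η F ▷ F.obj Y := by
          rw [h]; simp
      _ = F.obj Y ◁ ε F ≫ μ F Y (𝟙_ C) ≫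
            (F.map (Y ◁ η_ X Y) ≫ F.map (α_ Y X Y).inv ≫ F.map (ε_ X Y ▷ Y)) ≫
            δ F (𝟙_ C) Y ≫ η F ▷ F.obj Y := by
          rw [Functor.LaxMonoidal.μ_natural_right, Functor.OplaxMonoidal.δ_natural_left]
          simp
      _ = F.obj Y ◁ ε F ≫ μ F Y (𝟙_ C) ≫
            (F.map (ρ_ Y).hom ≫ F.map (λ_ Y).inv) ≫
            δ F (𝟙_ C) Y ≫ η F ▷ F.obj Y := by
          rw [hC]
      _ = (ρ_ (F.obj Y)).hom ≫ (λ_ (F.obj Y)).inv := by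
          simp
  evaluation_coevaluation' := by
    have h : δ F X Y ▷ F.obj X ≫ (α_ (F.obj X) (F.obj Y) (F.obj X)).hom ≫ F.obj X ◁ μ F Y X
        = μ F (X ⊗ Y) X ≫ F.map (α_ X Y X).hom ≫ δ F X (Y ⊗ X) := by
      rw [← cancel_epi (δ F (X ⊗ Y) X)]
      simp
    have hC : F.map (η_ X Y ▷ X) ≫ F.map (α_ X Y X).hom ≫ F.map (X ◁ ε_ X Y)
        = F.map (λ_ X).hom ≫ F.map (ρ_ X).inv := by
      simp only [← Functor.map_comp]
      rw [ExactPairing.evaluation_coevaluation]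
    calc (ε F ≫ F.map (η_ X Y) ≫ δ F X Y) ▷ F.obj X ≫ (α_ _ _ _).hom ≫
          F.obj X ◁ (μ F Y X ≫ F.map (ε_ X Y) ≫ η F)
        = ε F ▷ F.obj X ≫ F.map (η_ X Y) ▷ F.obj X ≫
            (δ F X Y ▷ F.obj X ≫ (α_ _ _ _).hom ≫ F.obj X ◁ μ F Y X) ≫
            F.obj X ◁ F.map (ε_ X Y) ≫ F.obj X ◁ η F := by
          simp
      _ = ε F ▷ F.obj X ≫ (F.map (η_ X Y) ▷ F.obj X ≫ μ F (X ⊗ Y) X) ≫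
            F.map (α_ X Y X).hom ≫ (δ F X (Y ⊗ X) ≫ F.obj X ◁ F.map (ε_ X Y)) ≫
            F.obj X ◁ η F := by
          rw [h]; simp
      _ = ε F ▷ F.obj X ≫ μ F (𝟙_ C) X ≫
            (F.map (η_ X Y ▷ X) ≫ F.map (α_ X Y X).hom ≫ F.map (X ◁ ε_ X Y)) ≫
            δ F X (𝟙_ C) ≫ F.obj X ◁ η F := by
          rw [Functor.LaxMonoidal.μ_natural_left, Functor.OplaxMonoidal.δ_natural_right]
          simp
      _ = ε F ▷ F.obj X ≫ μ F (𝟙_ C) X ≫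
            (F.map (λ_ X).hom ≫ F.map (ρ_ X).inv) ≫
            δ F X (𝟙_ C) ≫ F.obj X ◁ η F := by
          rw [hC]
      _ = (λ_ (F.obj X)).hom ≫ (ρ_ (F.obj X)).inv := by
          simp

lemma mapPairing_coevaluation' (X Y : C) [ExactPairing X Y] :
    (mapPairing F X Y).coevaluation' = ε F ≫ F.map (η_ X Y) ≫ δ F X Y := rfl

lemma mapPairing_evaluation' (X Y : C) [ExactPairing X Y] :
    (mapPairing F X Y).evaluation' = μ F Y X ≫ F.map (ε_ X Y) ≫ η F := rfl

/-- A braided strong monoidal functor preserves categorical traces, up to the unit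
comparison isomorphism. -/
lemma catTrace_map [BraidedCategory C] [BraidedCategory D]
    (G : C ⥤ D) [G.Braided] {X : C} [HasRightDual X] [HasRightDual (G.obj X)] (f : X ⟶ X) :
    catTrace (G.map f) = ε G ≫ G.map (catTrace f) ≫ η G := by
  rw [catTrace_eq_auxTr (G.map f),
    auxTr_eq_of_pairings _ (mapPairing G X (Xᘁ))]
  simp only [auxTr, mapPairing_coevaluation', mapPairing_evaluation', catTrace,
    Category.assoc]
  slice_lhs 4 5 => rw [BraidedCategory.braiding_naturality_left]
  slice_lhs 5 6 => rw [Functor.LaxMonoidal.μ_natural_right]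
  slice_lhs 3 5 => rw [← Functor.map_braiding]
  simp only [Category.assoc, ← Functor.map_comp]
  rw [BraidedCategory.braiding_naturality_left_assoc]
  simp [ExactPairing.coevaluation, ExactPairing.evaluation]

end TraceAux

/-- Let `F : C ⥤ D` be a full ⊗-functor between rigid additive symmetric monoidal
categories inducing an injective map `End_C(1) → End_D(1)`. Then `f` is universally of
trace zero iff `F.map f` is; consequently the induced functor `C/N_C → D/N_D` is
faithful: if `F.map f` and `F.map g` agree modulo `N_D` then `f` and `g` agree modulo
`N_C`. -/
theorem traceIdeal_reflects_and_induced_faithful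
    {C : Type*} [Category C] [Preadditive C]
    [MonoidalCategory C] [SymmetricCategory C] [MonoidalPreadditive C]
    [RigidCategory C]
    {D : Type*} [Category D] [Preadditive D]
    [MonoidalCategory D] [SymmetricCategory D] [MonoidalPreadditive D]
    [RigidCategory D]
    (F : C ⥤ D) [F.Braided] [F.Additive] [F.Full]
    (hinj : Function.Injective (fun h : End (𝟙_ C) =>
      ((Functor.Monoidal.εIso F).hom ≫ F.map h ≫ (Functor.Monoidal.εIso F).inv :
        End (𝟙_ D)))) :
    (∀ {X Y : C} (f : X ⟶ Y),
      (∀ g : Y ⟶ X, catTrace (f ≫ g) = 0) ↔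
      (∀ g' : F.obj Y ⟶ F.obj X, catTrace (F.map f ≫ g') = 0)) ∧
    (∀ {X Y : C} (f g : X ⟶ Y),
      (∀ h : F.obj Y ⟶ F.obj X, catTrace ((F.map f - F.map g) ≫ h) = 0) →
      (∀ h : Y ⟶ X, catTrace ((f - g) ≫ h) = 0)) := by
  have key : ∀ {X Y : C} (f : X ⟶ Y),
      (∀ g : Y ⟶ X, catTrace (f ≫ g) = 0) ↔
      (∀ g' : F.obj Y ⟶ F.obj X, catTrace (F.map f ≫ g') = 0) := by
    intro X Y f
    constructor
    · intro hf g'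
      obtain ⟨g, rfl⟩ := F.map_surjective g'
      rw [← F.map_comp, catTrace_map F (f ≫ g), hf g]
      simp
    · intro hf g
      have h' := hf (F.map g)
      rw [← F.map_comp, catTrace_map F (f ≫ g)] at h'
      apply hinj
      have h'' : F.map (catTrace (f ≫ g)) = 0 := by
        have := congrArg (fun t => Functor.OplaxMonoidal.η F ≫ t ≫ Functor.LaxMonoidal.ε F) h'
        simpa using this
      simpa using h''
  refine ⟨fun f => key f, fun f g hfg h => ?_⟩
  have := (key (f - g)).mpr (by
    intro h'
    have := hfg h'
    rwa [← F.map_sub] at this)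
  exact this h
end
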